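/- arXiv:1004.2982 — 13 statements merged into one kernel-verified Lean document; each statement's English description precedes it below -/
import Mathlib

section
/- Let (Ω,M) be a finite transformation monoid. Then ΩI(M) = soc Ω; that is, a point α ∈ Ω satisfies α = ωs for some ω ∈ Ω and some s in the minimal ideal I(M) if and only if the cyclic sub-M-set αM is minimal, i.e., for every m ∈ M there exists n ∈ M with (αm)n = α. -/
/-- In a finite function space, some positive iterate of any map is idempotent. -/
lemma exists_idem_iterate {Ω : Type*} [Finite Ω] (f : Ω → Ω) :
    ∃ k, 1 ≤ k ∧ ∀ x, f^[k] (f^[k] x) = f^[k] x := by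
  obtain ⟨i, j, hij, hfe⟩ := Finite.exists_ne_map_eq_of_infinite (fun k : ℕ => f^[k])
  wlog hlt : i < j generalizing i j
  · exact this j i hij.symm hfe.symm (by omega)
  set d := j - i with hd
  have hd1 : 1 ≤ d := by omega
  -- f^[a + d] = f^[a] for a ≥ i
  have key : ∀ a, i ≤ a → f^[a + d] = f^[a] := by
    intro a ha
    have h1 : a + d = (a - i) + j := by omega
    have h2 : a = (a - i) + i := by omega
    calc f^[a + d] = f^[(a - i) + j] := by rw [h1]
      _ = f^[a - i] ∘ f^[j] := Function.iterate_add f _ _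
      _ = f^[a - i] ∘ f^[i] := by rw [hfe]
      _ = f^[(a - i) + i] := (Function.iterate_add f _ _).symm
      _ = f^[a] := by rw [← h2]
  have key2 : ∀ t a, i ≤ a → f^[a + t * d] = f^[a] := by
    intro t
    induction t with
    | zero => simp
    | succ t ih =>
      intro a ha
      have : a + (t + 1) * d = (a + d) + t * d := by ring
      rw [this, ih (a + d) (by omega), key a ha]
  refine ⟨(i + 1) * d, by nlinarith, ?_⟩
  intro x
  have : f^[(i + 1) * d] ∘ f^[(i + 1) * d] = f^[(i + 1) * d] := by
    calc f^[(i + 1) * d] ∘ f^[(i + 1) * d] = f^[(i + 1) * d + (i + 1) * d] :=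
          (Function.iterate_add f _ _).symm
      _ = f^[(i + 1) * d] := key2 (i + 1) _ (by nlinarith)
  exact congrFun this x

/-- Let `(Ω, M)` be a finite transformation monoid.  Then
`Ω I(M) = soc Ω`: a point `α ∈ Ω` is of the form `ω s` with `s` in the minimal ideal
`I(M)` (i.e. for every `n ∈ S` there are `u, v ∈ S` with `s = unv`, which in the
right-action convention reads `s = v ∘ n ∘ u`) if and only if the cyclic sub-`M`-set
`αM` is minimal, i.e. for every `m ∈ M` there exists `n ∈ M` with `(αm)n = α`. -/
theorem socle_eq_image_of_minimalIdeal {Ω : Type*} [Fintype Ω] (S : Set (Ω → Ω))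
    (hid : id ∈ S) (hcomp : ∀ m ∈ S, ∀ n ∈ S, n ∘ m ∈ S) :
    ∀ α : Ω,
      (∃ ω : Ω, ∃ s ∈ S, (∀ n ∈ S, ∃ u ∈ S, ∃ v ∈ S, s = v ∘ n ∘ u) ∧ s ω = α) ↔
      (∀ m ∈ S, ∃ n ∈ S, n (m α) = α) := by
  have hiter : ∀ f ∈ S, ∀ k, f^[k] ∈ S := by
    intro f hf k
    induction k with
    | zero => simpa using hid
    | succ k ih => rw [Function.iterate_succ]; exact hcomp f hf _ ih
  intro α
  constructor
  · -- forward: α = s ω with s in the minimal ideal ⇒ αM minimal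
    rintro ⟨ω, s, hs, hI, hsω⟩ m hm
    -- apply the ideal property to m ∘ s
    obtain ⟨u, hu, v, hv, heq⟩ := hI (m ∘ s) (hcomp s hs m hm)
    set p : Ω → Ω := v ∘ m with hp
    have h0 : ∀ x, s x = p (s (u x)) := fun x => congrFun heq x
    have hrec : ∀ k x, s x = p^[k] (s (u^[k] x)) := by
      intro k
      induction k with
      | zero => simp
      | succ k ih =>
        intro x
        rw [Function.iterate_succ_apply u, Function.iterate_succ_apply' p,
          ← ih (u x), ← h0 x]
    obtain ⟨k, hk1, hidem⟩ := exists_idem_iterate p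
    have hPs : ∀ x, p^[k] (s x) = s x := by
      intro x
      rw [hrec k x, hidem, ← hrec k x]
    refine ⟨p^[k - 1] ∘ v, hcomp v hv _ (hiter p (hcomp m hm v hv) (k - 1)), ?_⟩
    have hk' : k - 1 + 1 = k := by omega
    calc (p^[k - 1] ∘ v) (m α) = p^[k - 1] (p α) := rfl
      _ = p^[k - 1 + 1] α := (Function.iterate_succ_apply p _ α).symm
      _ = p^[k] (s ω) := by rw [hk', ← hsω]
      _ = s ω := hPs ω
      _ = α := hsω
  · -- backward: αM minimal ⇒ α ∈ Ω I(M)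
    intro hmin
    -- the two-sided "principal ideal" of t
    set J : (Ω → Ω) → Set (Ω → Ω) :=
      fun t => {g | ∃ u ∈ S, ∃ v ∈ S, g = v ∘ t ∘ u} with hJ
    have hself : ∀ t, t ∈ J t := fun t => ⟨id, hid, id, hid, rfl⟩
    -- pick s ∈ S minimizing the cardinality of J s
    have hne : ((fun t => (J t).ncard) '' S).Nonempty := ⟨_, id, hid, rfl⟩
    obtain ⟨s, hs, hsc⟩ := Nat.sInf_mem hne
    have hminJ : ∀ t ∈ S, (J s).ncard ≤ (J t).ncard := by
      intro t ht
      have hsc' : (J s).ncard = sInf ((fun t => (J t).ncard) '' S) := hsc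
      rw [hsc']
      exact Nat.sInf_le ⟨t, ht, rfl⟩
    -- s lies in the minimal ideal
    have hI : ∀ n ∈ S, ∃ u ∈ S, ∃ v ∈ S, s = v ∘ n ∘ u := by
      intro n hn
      set t : Ω → Ω := s ∘ n ∘ s with ht
      have htS : t ∈ S := hcomp s hs _ (hcomp n hn s hs)
      have hsub : J t ⊆ J s := by
        rintro g ⟨u, hu, v, hv, rfl⟩
        exact ⟨n ∘ (s ∘ u), hcomp _ (hcomp u hu s hs) n hn, v, hv, rfl⟩
      have hEq : J t = J s :=
        Set.eq_of_subset_of_ncard_le hsub (hminJ t htS) (Set.toFinite _)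
      obtain ⟨u, hu, v, hv, heq⟩ : s ∈ J t := hEq ▸ hself s
      exact ⟨s ∘ u, hcomp u hu s hs, v ∘ s, hcomp s hs v hv,
        funext fun x => congrFun heq x⟩
    -- use minimality of αM with m := s
    obtain ⟨n0, hn0, hn0a⟩ := hmin s hs
    refine ⟨α, n0 ∘ s, hcomp s hs n0 hn0, ?_, hn0a⟩
    intro p hp
    obtain ⟨u, hu, v, hv, heq⟩ := hI p hp
    exact ⟨u, hu, n0 ∘ v, hcomp v hv n0 hn0, by rw [heq]; rfl⟩
end

section
/- Let (Ω,M) be a finite 0-transitive transformation monoid with sink 0. Then the zero map z (the constant map sending Ω to 0) belongs to M, and M has a unique 0-minimal ideal I: there is an ideal I of M with I ≠ {z} such that I is contained in every ideal J of M with J ≠ {z}; moreover every element m of I is regular (there exists n ∈ M with mnm = m), and I acts 0-transitively on Ω: for every α ≠ 0, αI = Ω. -/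
section AuxZeroTrans

variable {Ω : Type*} [Fintype Ω]

private lemma iterMemAux (S : Set (Ω → Ω)) (hid : id ∈ S)
    (hcomp : ∀ m ∈ S, ∀ n ∈ S, n ∘ m ∈ S) {f : Ω → Ω} (hf : f ∈ S) :
    ∀ k, f^[k] ∈ S := by
  intro k
  induction k with
  | zero => simpa using hid
  | succ k ih => rw [Function.iterate_succ]; exact hcomp f hf _ ih

private lemma existsIdemPowAux (f : Ω → Ω) : ∃ k, 1 ≤ k ∧ f^[k] ∘ f^[k] = f^[k] := by
  suffices h : ∀ i j : ℕ, i < j → f^[i] = f^[j] → ∃ k, 1 ≤ k ∧ f^[k] ∘ f^[k] = f^[k] by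
    obtain ⟨i, j, hne, heq⟩ := Finite.exists_ne_map_eq_of_infinite (fun n : ℕ => f^[n])
    have heq' : f^[i] = f^[j] := heq
    rcases hne.lt_or_gt with hlt | hlt
    · exact h i j hlt heq'
    · exact h j i hlt heq'.symm
  intro i j hlt heq
  set d := j - i with hd
  have hdpos : 0 < d := by omega
  have key : ∀ a, i ≤ a → f^[a + d] = f^[a] := by
    intro a ha
    obtain ⟨r, rfl⟩ := Nat.exists_eq_add_of_le ha
    have h1 : i + r + d = j + r := by omega
    rw [h1, Function.iterate_add, Function.iterate_add, heq]
  have key2 : ∀ t a, i ≤ a → f^[a + t * d] = f^[a] := by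
    intro t
    induction t with
    | zero => intro a ha; simp
    | succ t ih =>
      intro a ha
      have h1 : a + (t + 1) * d = (a + d) + t * d := by ring
      rw [h1, ih _ (by omega), key a ha]
  have hk : i ≤ (i + 1) * d := by
    have : (i + 1) * 1 ≤ (i + 1) * d := Nat.mul_le_mul_left _ hdpos
    omega
  refine ⟨(i + 1) * d, Nat.mul_pos (Nat.succ_pos i) hdpos, ?_⟩
  rw [← Function.iterate_add]
  exact key2 (i + 1) ((i + 1) * d) hk

private lemma constMemAux (S : Set (Ω → Ω)) (hid : id ∈ S)
    (hcomp : ∀ m ∈ S, ∀ n ∈ S, n ∘ m ∈ S) (z0 : Ω) (hsink : ∀ m ∈ S, m z0 = z0)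
    (h0trans : ∀ α : Ω, α ≠ z0 → ∀ β : Ω, ∃ m ∈ S, m α = β) :
    Function.const Ω z0 ∈ S := by
  classical
  suffices h : ∀ k, ∀ m ∈ S, (Finset.image m Finset.univ).card ≤ k →
      Function.const Ω z0 ∈ S from h _ id hid le_rfl
  intro k
  induction k with
  | zero =>
    intro m hm hc
    have : z0 ∈ Finset.image m Finset.univ :=
      Finset.mem_image.mpr ⟨z0, Finset.mem_univ _, hsink m hm⟩
    have := Finset.card_pos.mpr ⟨z0, this⟩
    omega
  | succ k ih =>
    intro m hm hc
    by_cases hz : ∀ x, m x = z0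
    · have hmz : m = Function.const Ω z0 := funext fun x => hz x
      rwa [hmz] at hm
    · push_neg at hz
      obtain ⟨α, hα⟩ := hz
      obtain ⟨n, hn, hnβ⟩ := h0trans (m α) hα z0
      refine ih (n ∘ m) (hcomp m hm n hn) ?_
      have himg : Finset.image (n ∘ m) Finset.univ
          = Finset.image n (Finset.image m Finset.univ) := Finset.image_image.symm
      set T := Finset.image m Finset.univ with hT
      have hβT : m α ∈ T := Finset.mem_image_of_mem m (Finset.mem_univ α)
      have hz0T : z0 ∈ T := Finset.mem_image.mpr ⟨z0, Finset.mem_univ _, hsink m hm⟩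
      have hsub : Finset.image n T ⊆ Finset.image n (T.erase (m α)) := by
        intro y hy
        obtain ⟨x, hx, rfl⟩ := Finset.mem_image.mp hy
        by_cases hxβ : x = m α
        · subst hxβ
          refine Finset.mem_image.mpr ⟨z0, Finset.mem_erase.mpr ⟨Ne.symm hα, hz0T⟩, ?_⟩
          rw [hsink n hn, hnβ]
        · exact Finset.mem_image.mpr ⟨x, Finset.mem_erase.mpr ⟨hxβ, hx⟩, rfl⟩
      have hlt : (Finset.image n T).card < T.card :=
        calc (Finset.image n T).card ≤ (Finset.image n (T.erase (m α))).card :=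
              Finset.card_le_card hsub
          _ ≤ (T.erase (m α)).card := Finset.card_image_le
          _ < T.card := Finset.card_erase_lt_of_mem hβT
      rw [himg]
      omega

end AuxZeroTrans

/-- Let `(Ω, M)` be a finite `0`-transitive transformation monoid with
sink `z0` (and at least one non-sink point).  Then the zero map (the constant map onto
`z0`) belongs to `M`, and `M` has a unique `0`-minimal ideal `I`: an ideal `I ≠ {z}`
contained in every ideal `J ≠ {z}`; moreover every element of `I` is regular
(`m = mnm`, i.e. `m = m ∘ n ∘ m` in the right-action convention) and `I` acts
`0`-transitively on `Ω`. -/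
theorem zeroTransitive_unique_zeroMinimal_ideal {Ω : Type*} [Fintype Ω]
    (S : Set (Ω → Ω)) (hid : id ∈ S) (hcomp : ∀ m ∈ S, ∀ n ∈ S, n ∘ m ∈ S)
    (z0 : Ω) (hsink : ∀ m ∈ S, m z0 = z0)
    (h0trans : ∀ α : Ω, α ≠ z0 → ∀ β : Ω, ∃ m ∈ S, m α = β)
    (hnt : ∃ α : Ω, α ≠ z0) :
    Function.const Ω z0 ∈ S ∧
    ∃ I : Set (Ω → Ω), I ⊆ S ∧ I.Nonempty ∧
      (∀ m ∈ I, ∀ n ∈ S, m ∘ n ∈ I ∧ n ∘ m ∈ I) ∧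
      I ≠ {Function.const Ω z0} ∧
      (∀ J : Set (Ω → Ω), J ⊆ S → J.Nonempty →
        (∀ m ∈ J, ∀ n ∈ S, m ∘ n ∈ J ∧ n ∘ m ∈ J) →
        J ≠ {Function.const Ω z0} → I ⊆ J) ∧
      (∀ m ∈ I, ∃ n ∈ S, m ∘ n ∘ m = m) ∧
      (∀ α : Ω, α ≠ z0 → ∀ β : Ω, ∃ m ∈ I, m α = β) := by
  classical
  set z : Ω → Ω := Function.const Ω z0 with hzdef
  have hzS : z ∈ S := constMemAux S hid hcomp z0 hsink h0trans
  obtain ⟨α₀, hα₀⟩ := hnt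
  have hne_point : ∀ m : Ω → Ω, m ≠ z → ∃ α, m α ≠ z0 := by
    intro m hm
    by_contra h
    push_neg at h
    exact hm (funext fun x => h x)
  set P : Set (Ω → Ω) → Prop := fun J => J ⊆ S ∧ J.Nonempty ∧
      (∀ m ∈ J, ∀ n ∈ S, m ∘ n ∈ J ∧ n ∘ m ∈ J) ∧ J ≠ {z} with hPdef
  have hzJ : ∀ J, P J → z ∈ J := by
    rintro J ⟨hJS, ⟨m, hm⟩, hJcl, -⟩
    have h1 := (hJcl m hm z hzS).2
    have h2 : z ∘ m = z := funext fun x => rfl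
    rwa [h2] at h1
  have hex_nonzero : ∀ J, P J → ∃ m ∈ J, m ≠ z := by
    intro J hJ
    by_contra h
    push_neg at h
    exact hJ.2.2.2 (Set.eq_singleton_iff_unique_mem.mpr ⟨hzJ J hJ, fun m hm => h m hm⟩)
  have hpair : ∀ J₁ J₂, P J₁ → P J₂ → P (J₁ ∩ J₂) := by
    intro J₁ J₂ h₁ h₂
    refine ⟨fun x hx => h₁.1 hx.1, ⟨z, hzJ _ h₁, hzJ _ h₂⟩, ?_, ?_⟩
    · intro m hm n hn
      exact ⟨⟨(h₁.2.2.1 m hm.1 n hn).1, (h₂.2.2.1 m hm.2 n hn).1⟩,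
             (h₁.2.2.1 m hm.1 n hn).2, (h₂.2.2.1 m hm.2 n hn).2⟩
    · obtain ⟨m₁, hm₁J, hm₁⟩ := hex_nonzero J₁ h₁
      obtain ⟨m₂, hm₂J, hm₂⟩ := hex_nonzero J₂ h₂
      obtain ⟨α, hα⟩ := hne_point m₁ hm₁
      obtain ⟨γ, hγ⟩ := hne_point m₂ hm₂
      obtain ⟨s, hs, hsβ⟩ := h0trans (m₁ α) hα γ
      have hwJ₁ : m₂ ∘ s ∘ m₁ ∈ J₁ :=
        (h₁.2.2.1 m₁ hm₁J (m₂ ∘ s) (hcomp s hs m₂ (h₂.1 hm₂J))).2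
      have hwJ₂ : m₂ ∘ s ∘ m₁ ∈ J₂ :=
        (h₂.2.2.1 m₂ hm₂J (s ∘ m₁) (hcomp m₁ (h₁.1 hm₁J) s hs)).1
      intro hcontra
      have hwz : m₂ ∘ s ∘ m₁ = z := by
        have : m₂ ∘ s ∘ m₁ ∈ ({z} : Set (Ω → Ω)) := hcontra ▸ ⟨hwJ₁, hwJ₂⟩
        exact this
      have : (m₂ ∘ s ∘ m₁) α = z0 := by rw [hwz]; rfl
      have h5 : m₂ (s (m₁ α)) = z0 := this
      rw [hsβ] at h5
      exact hγ h5
  have hPS : P S := by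
    refine ⟨Set.Subset.rfl, ⟨id, hid⟩,
      fun m hm n hn => ⟨hcomp n hn m hm, hcomp m hm n hn⟩, ?_⟩
    intro h
    have hidz : (id : Ω → Ω) ∈ ({z} : Set (Ω → Ω)) := h ▸ hid
    exact hα₀ (congrFun (hidz : (id : Ω → Ω) = z) α₀)
  have hexists : ∃ n : ℕ, ∃ J : Set (Ω → Ω), P J ∧ J.ncard = n := ⟨S.ncard, S, hPS, rfl⟩
  obtain ⟨I, hPI, hIcard⟩ := Nat.find_spec hexists
  have hImin : ∀ J, P J → I ⊆ J := by
    intro J hPJ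
    have hPK := hpair I J hPI hPJ
    have hle : Nat.find hexists ≤ (I ∩ J).ncard := Nat.find_min' hexists ⟨I ∩ J, hPK, rfl⟩
    have heq : I ∩ J = I :=
      Set.eq_of_subset_of_ncard_le Set.inter_subset_left (by rw [hIcard]; exact hle)
    intro x hx
    rw [← heq] at hx
    exact hx.2
  obtain ⟨hIS, hInem, hIcl, hIne⟩ := id hPI
  have hItrans : ∀ α : Ω, α ≠ z0 → ∀ β : Ω, ∃ m ∈ I, m α = β := by
    intro α hα β
    obtain ⟨w, hwI, hwz⟩ := hex_nonzero I hPI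
    obtain ⟨γ, hγ⟩ := hne_point w hwz
    obtain ⟨a, ha, haα⟩ := h0trans α hα γ
    obtain ⟨b, hb, hbδ⟩ := h0trans (w γ) (by
      intro h
      exact hγ h) β
    refine ⟨b ∘ w ∘ a, ?_, ?_⟩
    · have h1 := (hIcl w hwI a ha).1
      have h2 := (hIcl (w ∘ a) h1 b hb).2
      exact h2
    · show b (w (a α)) = β
      rw [haα, hbδ]
  have hreg : ∀ m ∈ I, ∃ n ∈ S, m ∘ n ∘ m = m := by
    intro m hmI
    by_cases hmz : m = z
    · exact ⟨z, hzS, by subst hmz; funext x; rfl⟩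
    · obtain ⟨α, hα⟩ := hne_point m hmz
      obtain ⟨s, hs, hsβ⟩ := h0trans (m α) hα α
      have hmS : m ∈ S := hIS hmI
      have hwS : m ∘ s ∘ m ∈ S := hcomp (s ∘ m) (hcomp m hmS s hs) m hmS
      have hwz : m ∘ s ∘ m ≠ z := by
        intro h
        have h1 : (m ∘ s ∘ m) α = z0 := by rw [h]; rfl
        have h2 : m (s (m α)) = z0 := h1
        rw [hsβ] at h2
        exact hα h2
      set K : Set (Ω → Ω) := {f | ∃ a ∈ S, ∃ b ∈ S, f = a ∘ (m ∘ s ∘ m) ∘ b} with hKdef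
      have hPK : P K := by
        refine ⟨?_, ⟨m ∘ s ∘ m, id, hid, id, hid, by funext x; rfl⟩, ?_, ?_⟩
        · rintro f ⟨a, ha, b, hb, rfl⟩
          exact hcomp ((m ∘ s ∘ m) ∘ b) (hcomp b hb _ hwS) a ha
        · rintro f ⟨a, ha, b, hb, rfl⟩ n hn
          constructor
          · exact ⟨a, ha, b ∘ n, hcomp n hn b hb, by funext x; rfl⟩
          · exact ⟨n ∘ a, hcomp a ha n hn, b, hb, by funext x; rfl⟩
        · intro h
          have hwK : m ∘ s ∘ m ∈ K := ⟨id, hid, id, hid, by funext x; rfl⟩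
          rw [h] at hwK
          exact hwz hwK
      obtain ⟨a, ha, b, hb, hmab⟩ := hImin K hPK hmI
      have hpt : ∀ x, m x = a (m (s (m (b x)))) := fun x => congrFun hmab x
      set p : Ω → Ω := (a ∘ m) ∘ s with hp
      have hpS : p ∈ S := hcomp s hs (a ∘ m) (hcomp m hmS a ha)
      have h1 : ∀ x, m x = p (m (b x)) := hpt
      have claim1 : ∀ k x, m x = p^[k] (m (b^[k] x)) := by
        intro k
        induction k with
        | zero => intro x; simp
        | succ k ih =>
          intro x
          rw [Function.iterate_succ_apply' p k, Function.iterate_succ_apply b k x,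
            ← ih (b x)]
          exact h1 x
      obtain ⟨k, hk1, hkid⟩ := existsIdemPowAux p
      have h2 : ∀ x, m x = p^[k] (m x) := by
        intro x
        have e1 := claim1 k x
        have e2 : p^[k] (p^[k] (m (b^[k] x))) = p^[k] (m (b^[k] x)) := congrFun hkid _
        calc m x = p^[k] (m (b^[k] x)) := e1
          _ = p^[k] (p^[k] (m (b^[k] x))) := e2.symm
          _ = p^[k] (m x) := by rw [← e1]
      obtain ⟨t, rfl⟩ : ∃ t, k = t + 1 := ⟨k - 1, by omega⟩
      have h3 : ∀ x, m x = (p^[t] ∘ a) (m ((s ∘ m) x)) := by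
        intro x
        have h4 := h2 x
        rw [Function.iterate_succ_apply p t (m x)] at h4
        exact h4
      set c : Ω → Ω := p^[t] ∘ a with hc
      have hcS : c ∈ S := hcomp a ha (p^[t]) (iterMemAux S hid hcomp hpS t)
      set q : Ω → Ω := s ∘ m with hq
      have hqS : q ∈ S := hcomp m hmS s hs
      have claim2 : ∀ j x, m x = c^[j] (m (q^[j] x)) := by
        intro j
        induction j with
        | zero => intro x; simp
        | succ j ih =>
          intro x
          rw [Function.iterate_succ_apply' c j, Function.iterate_succ_apply q j x,
            ← ih (q x)]
          exact h3 x
      obtain ⟨j, hj1, hjid⟩ := existsIdemPowAux q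
      have h4 : ∀ x, m x = m (q^[j] x) := by
        intro x
        have e1 := claim2 j x
        have e2 := claim2 j (q^[j] x)
        have e3 : q^[j] (q^[j] x) = q^[j] x := congrFun hjid x
        rw [e3] at e2
        exact e1.trans e2.symm
      obtain ⟨t', rfl⟩ : ∃ t', j = t' + 1 := ⟨j - 1, by omega⟩
      have shuffle : ∀ n x, q^[n + 1] x = s ((m ∘ s)^[n] (m x)) := by
        intro n
        induction n with
        | zero => intro x; rw [Function.iterate_one]; rfl
        | succ n ih =>
          intro x
          rw [Function.iterate_succ_apply' q (n + 1), ih x,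
            Function.iterate_succ_apply' (m ∘ s) n]
          rfl
      refine ⟨s ∘ (m ∘ s)^[t'],
        hcomp ((m ∘ s)^[t']) (iterMemAux S hid hcomp (hcomp s hs m hmS) t') s hs, ?_⟩
      funext x
      show m (s ((m ∘ s)^[t'] (m x))) = m x
      rw [← shuffle t' x]
      exact (h4 x).symm
  exact ⟨hzS, I, hIS, hInem, hIcl, hIne,
    fun J hJS hJne hJcl hJz => hImin J ⟨hJS, hJne, hJcl, hJz⟩, hreg, hItrans⟩
end

section
/- Let (Ω,M) be a primitive finite transformation monoid with |Ω| > 2. Then M is either transitive on Ω, or 0-transitive on Ω: either ωM = Ω for all ω ∈ Ω, or there exists a sink 0 ∈ Ω (0m = 0 for all m ∈ M) with αM = Ω for all α ≠ 0. -/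
/-- A primitive finite transformation monoid `(Ω, M)` with `|Ω| > 2`
is either transitive or `0`-transitive. -/
theorem primitive_transitive_or_zeroTransitive {Ω : Type*} [Fintype Ω]
    (hcard : 2 < Fintype.card Ω)
    (S : Set (Ω → Ω)) (hid : id ∈ S) (hcomp : ∀ m ∈ S, ∀ n ∈ S, n ∘ m ∈ S)
    (hprim : ∀ r : Ω → Ω → Prop, Equivalence r →
      (∀ a b : Ω, r a b → ∀ m ∈ S, r (m a) (m b)) →
      (∀ a b : Ω, r a b ↔ a = b) ∨ (∀ a b : Ω, r a b)) :
    (∀ ω β : Ω, ∃ m ∈ S, m ω = β) ∨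
    (∃ z0 : Ω, (∀ m ∈ S, m z0 = z0) ∧
      ∀ α : Ω, α ≠ z0 → ∀ β : Ω, ∃ m ∈ S, m α = β) := by
  classical
  -- Key: every point either has full orbit or is a sink.
  have key : ∀ α : Ω, (∀ β : Ω, ∃ m ∈ S, m α = β) ∨ (∀ m ∈ S, m α = α) := by
    intro α
    set O : Set Ω := {x | ∃ m ∈ S, m α = x} with hO
    have hOinv : ∀ x ∈ O, ∀ m ∈ S, m x ∈ O := by
      rintro x ⟨n, hn, rfl⟩ m hm
      exact ⟨m ∘ n, hcomp n hn m hm, rfl⟩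
    have hαO : α ∈ O := ⟨id, hid, rfl⟩
    have hp := hprim (fun x y => x = y ∨ (x ∈ O ∧ y ∈ O)) ?_ ?_
    · rcases hp with h | h
      · right
        intro m hm
        exact (h (m α) α).mp (Or.inr ⟨hOinv α hαO m hm, hαO⟩)
      · left
        intro β
        rcases h β α with h1 | h1
        · rw [h1]; exact hαO
        · exact h1.1
    · constructor
      · intro x; exact Or.inl rfl
      · intro x y h; rcases h with h | h
        · exact Or.inl h.symm
        · exact Or.inr ⟨h.2, h.1⟩
      · intro x y z hxy hyz
        rcases hxy with rfl | hxy
        · exact hyz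
        · rcases hyz with rfl | hyz
          · exact Or.inr hxy
          · exact Or.inr ⟨hxy.1, hyz.2⟩
    · intro x y h m hm
      rcases h with rfl | h
      · exact Or.inl rfl
      · exact Or.inr ⟨hOinv x h.1 m hm, hOinv y h.2 m hm⟩
  by_cases hs : ∃ a : Ω, ∀ m ∈ S, m a = a
  · obtain ⟨a, ha⟩ := hs
    right
    refine ⟨a, ha, ?_⟩
    intro α hα
    rcases key α with h | h
    · exact h
    · -- α is a second sink, distinct from a: contradiction with primitivity.
      exfalso
      have hp := hprim (fun x y => x = y ∨ ((x = a ∨ x = α) ∧ (y = a ∨ y = α))) ?_ ?_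
      · rcases hp with h2 | h2
        · exact hα ((h2 α a).mp (Or.inr ⟨Or.inr rfl, Or.inl rfl⟩))
        · have hsub : (Finset.univ : Finset Ω) ⊆ {a, α} := by
            intro x _
            rcases h2 x a with h3 | h3
            · simp [h3]
            · rcases h3.1 with h4 | h4 <;> simp [h4]
          have h5 : Fintype.card Ω ≤ 2 := by
            calc Fintype.card Ω = (Finset.univ : Finset Ω).card := rfl
              _ ≤ ({a, α} : Finset Ω).card := Finset.card_le_card hsub
              _ ≤ 2 := Finset.card_insert_le a {α} |>.trans (by simp)
          omega
      · constructor
        · intro x; exact Or.inl rfl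
        · intro x y hxy; rcases hxy with h3 | h3
          · exact Or.inl h3.symm
          · exact Or.inr ⟨h3.2, h3.1⟩
        · intro x y z hxy hyz
          rcases hxy with rfl | hxy
          · exact hyz
          · rcases hyz with rfl | hyz
            · exact Or.inr hxy
            · exact Or.inr ⟨hxy.1, hyz.2⟩
      · intro x y hxy m hm
        rcases hxy with rfl | hxy
        · exact Or.inl rfl
        · refine Or.inr ⟨?_, ?_⟩
          · rcases hxy.1 with rfl | rfl
            · exact Or.inl (ha m hm)
            · exact Or.inr (h m hm)
          · rcases hxy.2 with rfl | rfl
            · exact Or.inl (ha m hm)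
            · exact Or.inr (h m hm)
  · left
    intro ω β
    rcases key ω with h | h
    · exact h β
    · exact absurd ⟨ω, h⟩ hs
end

section
/- Let (Ω,M) be a primitive finite transformation monoid and let e ∈ M be idempotent. Then (Ωe, eMe) is a primitive transformation monoid: the only equivalence relations on the set Ωe = {ωe : ω ∈ Ω} that are stable under the action of all elements of eMe are the equality relation and the full relation. -/
/-- If `(Ω, M)` is a primitive finite transformation monoid and
`e ∈ M` is idempotent, then `(Ωe, eMe)` is primitive: every equivalence relation on
`Ωe = range e` that is stable under the action of every `eme` (`α ↦ e (m (e α))` in the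
right-action convention) is either the equality relation or the full relation. -/
theorem primitive_restrict_idempotent {Ω : Type*} [Fintype Ω]
    (S : Set (Ω → Ω)) (hid : id ∈ S) (hcomp : ∀ m ∈ S, ∀ n ∈ S, n ∘ m ∈ S)
    (hprim : ∀ r : Ω → Ω → Prop, Equivalence r →
      (∀ a b : Ω, r a b → ∀ m ∈ S, r (m a) (m b)) →
      (∀ a b : Ω, r a b ↔ a = b) ∨ (∀ a b : Ω, r a b))
    (e : Ω → Ω) (he : e ∈ S) (hee : e ∘ e = e)
    (r : Set.range e → Set.range e → Prop) (hr : Equivalence r)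
    (hstable : ∀ m ∈ S, ∀ a b : Set.range e, r a b →
      r ⟨e (m (e a)), ⟨m (e a), rfl⟩⟩ ⟨e (m (e b)), ⟨m (e b), rfl⟩⟩) :
    (∀ a b : Set.range e, r a b ↔ a = b) ∨ (∀ a b : Set.range e, r a b) := by
  have hefix : ∀ a : Set.range e, e (a : Ω) = (a : Ω) := by
    rintro ⟨_, x, rfl⟩
    exact congrFun hee x
  -- Lift r to a relation on Ω
  set R : Ω → Ω → Prop := fun a b =>
    ∀ m ∈ S, r ⟨e (m a), ⟨m a, rfl⟩⟩ ⟨e (m b), ⟨m b, rfl⟩⟩ with hR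
  have hReq : Equivalence R := by
    constructor
    · intro a m hm; exact hr.refl _
    · intro a b h m hm; exact hr.symm (h m hm)
    · intro a b c hab hbc m hm; exact hr.trans (hab m hm) (hbc m hm)
  have hRstab : ∀ a b : Ω, R a b → ∀ m ∈ S, R (m a) (m b) := by
    intro a b h m hm n hn
    exact h (n ∘ m) (hcomp m hm n hn)
  rcases hprim R hReq hRstab with h | h
  · -- R is equality, so r is equality
    left
    intro a b
    constructor
    · intro hab
      have hRab : R (a : Ω) (b : Ω) := by
        intro m hm
        have := hstable m hm a b hab
        rwa [hefix a, hefix b] at this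
      exact Subtype.ext ((h _ _).mp hRab)
    · rintro rfl; exact hr.refl a
  · -- R is full, so r is full
    right
    intro a b
    have := h (a : Ω) (b : Ω) id hid
    simp only [id_eq] at this
    convert this using 2 <;> rw [hefix]
end

section
/- Let Γ = (V, E) be a digraph (E ⊆ V × V disjoint from the diagonal) and let M be a monoid acting on V on the right by cellular morphisms which is edge transitive: for every (v,w) ∈ E and m ∈ M, either vm = wm or (vm, wm) ∈ E, and for all edges (v,w), (x,y) ∈ E there exists m ∈ M with (vm, wm) = (x,y). Then either Γ is acyclic (there is no edge (v,w) ∈ E such that v is reachable from w), or every weak component of Γ is strongly connected (whenever x and y are weakly connected, y is reachable from x). -/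
/-- Let `Γ = (V, E)` be a digraph (`E` disjoint from the diagonal) and
let `M` (here the set `S` of self-maps, containing `id` and closed under the
right-action composition) act on `V` by cellular morphisms, edge transitively.  Then
either `Γ` is acyclic (no edge `(v, w)` with `v` reachable from `w`), or every weak
component of `Γ` is strongly connected (weakly connected vertices are mutually
reachable). -/
theorem edgeTransitive_acyclic_or_stronglyConnected {V : Type*}
    (E : V → V → Prop) (hirr : ∀ v : V, ¬ E v v)
    (S : Set (V → V)) (hid : id ∈ S) (hcomp : ∀ m ∈ S, ∀ n ∈ S, n ∘ m ∈ S)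
    (hcell : ∀ m ∈ S, ∀ v w : V, E v w → m v = m w ∨ E (m v) (m w))
    (hedge : ∀ v w x y : V, E v w → E x y → ∃ m ∈ S, m v = x ∧ m w = y) :
    (∀ v w : V, E v w → ¬ Relation.ReflTransGen E w v) ∨
    (∀ x y : V, Relation.EqvGen E x y → Relation.ReflTransGen E x y) := by
  -- cellular maps preserve reachability
  have hpres : ∀ m ∈ S, ∀ a b : V, Relation.ReflTransGen E a b →
      Relation.ReflTransGen E (m a) (m b) := by
    intro m hm a b hab
    induction hab with
    | refl => exact Relation.ReflTransGen.refl
    | tail _ hbc ih =>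
        rcases hcell m hm _ _ hbc with h | h
        · rwa [← h]
        · exact ih.tail h
  by_cases hac : ∀ v w : V, E v w → ¬ Relation.ReflTransGen E w v
  · exact Or.inl hac
  · right
    push_neg at hac
    obtain ⟨v, w, hvw, hwv⟩ := hac
    -- every edge is reversible in the reachability relation
    have hrev : ∀ x y : V, E x y → Relation.ReflTransGen E y x := by
      intro x y hxy
      obtain ⟨m, hm, hx, hy⟩ := hedge v w x y hvw hxy
      have := hpres m hm w v hwv
      rwa [hx, hy] at this
    intro x y hxy
    have : Relation.ReflTransGen E x y ∧ Relation.ReflTransGen E y x := by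
      induction hxy with
      | rel a b h => exact ⟨Relation.ReflTransGen.single h, hrev a b h⟩
      | refl a => exact ⟨.refl, .refl⟩
      | symm a b _ ih => exact ⟨ih.2, ih.1⟩
      | trans a b c _ _ ih1 ih2 => exact ⟨ih1.1.trans ih2.1, ih2.2.trans ih1.2⟩
    exact this.1
end

section
/- Let (Ω,M) be a finite transitive transformation monoid. Then (Ω,M) is primitive if and only if for every non-trivial orbital O of M, the orbital digraph Γ(O) is weakly connected, i.e., the equivalence relation on Ω generated by the relation {(α,β) : (α,β) ∈ O} is the full relation on Ω. -/
/-- A finite transitive transformation monoid `(Ω, M)` is primitive if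
and only if every non-trivial orbital digraph `Γ(O)` is weakly connected, i.e. the
equivalence relation generated by `O` is the full relation on `Ω`.  Here a non-trivial
orbital is the strong orbit `O` of a pair `(α, β)` with `α ≠ β` that is minimal among
strong orbits off the diagonal. -/
theorem primitive_iff_orbital_digraphs_weakly_connected {Ω : Type*} [Fintype Ω]
    (S : Set (Ω → Ω)) (hid : id ∈ S) (hcomp : ∀ m ∈ S, ∀ n ∈ S, n ∘ m ∈ S)
    (htrans : ∀ α β : Ω, ∃ m ∈ S, m α = β) :
    (∀ r : Ω → Ω → Prop, Equivalence r →
      (∀ a b : Ω, r a b → ∀ m ∈ S, r (m a) (m b)) →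
      (∀ a b : Ω, r a b ↔ a = b) ∨ (∀ a b : Ω, r a b))
    ↔
    (∀ O : Set (Ω × Ω),
      (∃ α β : Ω, α ≠ β ∧
        (∀ m ∈ S, m α ≠ m β → ∃ n ∈ S, n (m α) = α ∧ n (m β) = β) ∧
        O = {q : Ω × Ω | (∃ m ∈ S, (m α, m β) = q) ∧
              (∃ n ∈ S, (n q.1, n q.2) = (α, β))}) →
      ∀ x y : Ω, Relation.EqvGen (fun a b : Ω => (a, b) ∈ O) x y) := by
  classical
  constructor
  · -- primitive → connected
    intro hprim O hO x y
    obtain ⟨α, β, hne, hmin, rfl⟩ := hO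
    set O : Set (Ω × Ω) := {q : Ω × Ω | (∃ m ∈ S, (m α, m β) = q) ∧
              (∃ n ∈ S, (n q.1, n q.2) = (α, β))} with hOdef
    -- the base relation is "almost" invariant
    have hbase : ∀ a b : Ω, (a, b) ∈ O → ∀ m ∈ S, m a = m b ∨ (m a, m b) ∈ O := by
      rintro a b ⟨⟨m₁, hm₁, h1⟩, -⟩ m hm
      by_cases h : m a = m b
      · exact Or.inl h
      · right
        obtain ⟨h1a, h1b⟩ := Prod.mk.injEq .. ▸ h1
        have hmm₁ : m ∘ m₁ ∈ S := hcomp m₁ hm₁ m hm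
        have hne' : (m ∘ m₁) α ≠ (m ∘ m₁) β := by
          simp only [Function.comp_apply, h1a, h1b]; exact h
        obtain ⟨n, hn, hn1, hn2⟩ := hmin (m ∘ m₁) hmm₁ hne'
        refine ⟨⟨m ∘ m₁, hmm₁, by simp [Function.comp_apply, h1a, h1b]⟩,
          ⟨n, hn, ?_⟩⟩
        simp only [Function.comp_apply, h1a, h1b] at hn1 hn2
        simp [hn1, hn2]
    -- EqvGen of the base relation is a congruence
    have hcong : ∀ a b : Ω, Relation.EqvGen (fun a b : Ω => (a, b) ∈ O) a b →
        ∀ m ∈ S, Relation.EqvGen (fun a b : Ω => (a, b) ∈ O) (m a) (m b) := by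
      intro a b h m hm
      induction h with
      | rel u v huv =>
          rcases hbase u v huv m hm with h | h
          · exact h ▸ Relation.EqvGen.refl _
          · exact Relation.EqvGen.rel _ _ h
      | refl u => exact Relation.EqvGen.refl _
      | symm u v _ ih => exact Relation.EqvGen.symm _ _ ih
      | trans u v w _ _ ih1 ih2 => exact Relation.EqvGen.trans _ _ _ ih1 ih2
    rcases hprim _ (Relation.EqvGen.is_equivalence _) hcong with h | h
    · exfalso
      have : (α, β) ∈ O := ⟨⟨id, hid, rfl⟩, ⟨id, hid, rfl⟩⟩
      exact hne ((h α β).mp (Relation.EqvGen.rel _ _ this))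
    · exact h x y
  · -- connected → primitive
    intro hconn r hequiv hcong
    by_cases hd : ∀ a b : Ω, r a b → a = b
    · left
      intro a b
      exact ⟨hd a b, fun h => h ▸ hequiv.refl a⟩
    · right
      push_neg at hd
      obtain ⟨α, β, hrab, hne⟩ := hd
      -- reachability preorder on pairs
      set reach : Ω × Ω → Ω × Ω → Prop :=
        fun p q => ∃ m ∈ S, (m p.1, m p.2) = q with hreach
      have reach_trans : ∀ p q s, reach p q → reach q s → reach p s := by
        rintro p q s ⟨m, hm, rfl⟩ ⟨n, hn, rfl⟩
        exact ⟨n ∘ m, hcomp m hm n hn, rfl⟩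
      have reach_refl : ∀ p, reach p p := fun p => ⟨id, hid, rfl⟩
      -- off-diagonal pairs reachable from (α, β)
      set D : Finset (Ω × Ω) :=
        Finset.univ.filter (fun q => q.1 ≠ q.2 ∧ reach (α, β) q) with hD
      have hmemD : ∀ q, q ∈ D ↔ q.1 ≠ q.2 ∧ reach (α, β) q := by
        intro q; simp [hD]
      have hDne : D.Nonempty := ⟨(α, β), (hmemD _).mpr ⟨hne, reach_refl _⟩⟩
      set down : Ω × Ω → Finset (Ω × Ω) :=
        fun p => Finset.univ.filter (fun q => reach p q) with hdown
      have hmemdown : ∀ p q, q ∈ down p ↔ reach p q := by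
        intro p q; simp [hdown]
      obtain ⟨p, hpD, hpmin⟩ := D.exists_min_image (fun p => (down p).card) hDne
      obtain ⟨hpne, hpreach⟩ := (hmemD p).mp hpD
      -- p = (γ, δ) is a minimal off-diagonal pair
      obtain ⟨γ, δ⟩ := p
      simp only at hpne hpreach
      have hrgd : r γ δ := by
        obtain ⟨m, hm, hmeq⟩ := hpreach
        obtain ⟨h1, h2⟩ := Prod.mk.injEq .. ▸ hmeq
        rw [← h1, ← h2]
        exact hcong α β hrab m hm
      have hminimal : ∀ m ∈ S, m γ ≠ m δ → ∃ n ∈ S, n (m γ) = γ ∧ n (m δ) = δ := by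
        intro m hm hmne
        have hq : reach (γ, δ) (m γ, m δ) := ⟨m, hm, rfl⟩
        have hqD : (m γ, m δ) ∈ D :=
          (hmemD _).mpr ⟨hmne, reach_trans _ _ _ hpreach hq⟩
        have hsub : down (m γ, m δ) ⊆ down (γ, δ) := by
          intro s hs
          exact (hmemdown _ _).mpr (reach_trans _ _ _ hq ((hmemdown _ _).mp hs))
        have hcard := hpmin _ hqD
        have heq : down (m γ, m δ) = down (γ, δ) :=
          Finset.eq_of_subset_of_card_le hsub hcard
        have : (γ, δ) ∈ down (m γ, m δ) := by
          rw [heq]; exact (hmemdown _ _).mpr (reach_refl _)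
        obtain ⟨n, hn, hneq⟩ := (hmemdown _ _).mp this
        obtain ⟨h1, h2⟩ := Prod.mk.injEq .. ▸ hneq
        exact ⟨n, hn, h1, h2⟩
      -- the orbital of (γ, δ)
      set O : Set (Ω × Ω) := {q : Ω × Ω | (∃ m ∈ S, (m γ, m δ) = q) ∧
              (∃ n ∈ S, (n q.1, n q.2) = (γ, δ))} with hOdef
      have hO : ∀ x y : Ω, Relation.EqvGen (fun a b : Ω => (a, b) ∈ O) x y :=
        hconn O ⟨γ, δ, hpne, hminimal, rfl⟩
      -- base relation of O implies r
      have hOr : ∀ a b : Ω, (a, b) ∈ O → r a b := by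
        rintro a b ⟨⟨m, hm, hmeq⟩, -⟩
        obtain ⟨h1, h2⟩ := Prod.mk.injEq .. ▸ hmeq
        rw [← h1, ← h2]
        exact hcong γ δ hrgd m hm
      intro x y
      induction hO x y with
      | rel u v huv => exact hOr u v huv
      | refl u => exact hequiv.refl u
      | symm u v _ ih => exact hequiv.symm ih
      | trans u v w _ _ ih1 ih2 => exact hequiv.trans ih1 ih2
end

section
/- Let (Ω,M) be a finite transitive transformation monoid with M aperiodic, i.e., for every m ∈ M there exists k ≥ 1 with m^{k+1} = m^k. Then every non-trivial orbital digraph Γ(O) is acyclic: there is no pair (α,β) ∈ O such that α is reachable from β in the reflexive–transitive closure of the relation O. -/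
/-- Trahtman. Let `(Ω, M)` be a finite transitive transformation
monoid with `M` aperiodic (for every `m` there is `k ≥ 1` with `m^(k+1) = m^k`).
Then every non-trivial orbital digraph `Γ(O)` is acyclic: there is no pair
`(α, β) ∈ O` with `α` reachable from `β` in the reflexive-transitive closure of `O`. -/
theorem aperiodic_orbital_digraphs_acyclic {Ω : Type*} [Fintype Ω]
    (S : Set (Ω → Ω)) (hid : id ∈ S) (hcomp : ∀ m ∈ S, ∀ n ∈ S, n ∘ m ∈ S)
    (htrans : ∀ α β : Ω, ∃ m ∈ S, m α = β)
    (haper : ∀ m ∈ S, ∃ k : ℕ, 1 ≤ k ∧ m^[k + 1] = m^[k]) :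
    ∀ O : Set (Ω × Ω),
      (∃ α β : Ω, α ≠ β ∧
        (∀ m ∈ S, m α ≠ m β → ∃ n ∈ S, n (m α) = α ∧ n (m β) = β) ∧
        O = {q : Ω × Ω | (∃ m ∈ S, (m α, m β) = q) ∧
              (∃ n ∈ S, (n q.1, n q.2) = (α, β))}) →
      ∀ p ∈ O, ¬ Relation.ReflTransGen (fun a b : Ω => (a, b) ∈ O) p.2 p.1 := by
  classical
  rintro O ⟨α, β, hab, hmin, hOdef⟩ p hp hR
  have hmem : ∀ a b : Ω, (a, b) ∈ O ↔
      ((∃ m ∈ S, (m α, m β) = (a, b)) ∧ (∃ n ∈ S, (n a, n b) = (α, β))) := by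
    intro a b; rw [hOdef]; exact Iff.rfl
  -- edges have distinct endpoints
  have hne : ∀ a b : Ω, (a, b) ∈ O → a ≠ b := by
    intro a b h hEq
    obtain ⟨-, n, hnS, hn⟩ := (hmem a b).mp h
    simp only [Prod.mk.injEq] at hn
    exact hab (by rw [← hn.1, ← hn.2, hEq])
  -- images of edges are edges or collapsed
  have hmapO : ∀ a b : Ω, (a, b) ∈ O → ∀ s ∈ S, s a ≠ s b → (s a, s b) ∈ O := by
    intro a b h s hs hne'
    obtain ⟨⟨m, hmS, hm⟩, -⟩ := (hmem a b).mp h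
    simp only [Prod.mk.injEq] at hm
    have hsm : s ∘ m ∈ S := hcomp m hmS s hs
    have h1 : (s ∘ m) α = s a := by simp [Function.comp, hm.1]
    have h2 : (s ∘ m) β = s b := by simp [Function.comp, hm.2]
    have hd : (s ∘ m) α ≠ (s ∘ m) β := by rw [h1, h2]; exact hne'
    obtain ⟨nn, hnnS, hnn1, hnn2⟩ := hmin (s ∘ m) hsm hd
    rw [h1] at hnn1; rw [h2] at hnn2
    exact (hmem _ _).mpr ⟨⟨s ∘ m, hsm, by rw [h1, h2]⟩, ⟨nn, hnnS, by rw [hnn1, hnn2]⟩⟩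
  -- iterates stay in S
  have hiter : ∀ t ∈ S, ∀ j : ℕ, t^[j] ∈ S := by
    intro t ht j
    induction j with
    | zero => simpa using hid
    | succ j ih => rw [Function.iterate_succ]; exact hcomp t ht _ ih
  -- shrink a closed walk with a collapsed edge and a real edge
  have shrink : ∀ (N : ℕ) (x : ℕ → Ω), x N = x 0 →
      (∀ i, i < N → x i = x (i+1) ∨ (x i, x (i+1)) ∈ O) →
      (∃ i, i < N ∧ (x i, x (i+1)) ∈ O) → (∃ i, i < N ∧ x i = x (i+1)) →
      ∃ y : ℕ → Ω, y (N-1) = y 0 ∧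
        (∀ i, i < N-1 → y i = y (i+1) ∨ (y i, y (i+1)) ∈ O) ∧
        (∃ i, i < N-1 ∧ (y i, y (i+1)) ∈ O) := by
    rintro N x hclose hedges ⟨i₁, hi₁N, hi₁⟩ ⟨i₀, hi₀N, hi₀⟩
    have hi₁0 : i₁ ≠ i₀ := by intro h; exact hne _ _ hi₁ (h ▸ hi₀)
    refine ⟨fun j => if j ≤ i₀ then x j else x (j+1), ?_, ?_, ?_⟩
    · by_cases h : N - 1 ≤ i₀
      · have hEq : i₀ = N - 1 := by omega
        simp only [if_pos h, if_pos (Nat.zero_le i₀)]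
        have : x (N-1) = x (N-1+1) := by rw [← hEq]; exact hi₀
        rw [this]
        have : N - 1 + 1 = N := by omega
        rw [this, hclose]
      · simp only [if_neg h, if_pos (Nat.zero_le i₀)]
        have : N - 1 + 1 = N := by omega
        rw [this, hclose]
    · intro j hj
      rcases lt_trichotomy j i₀ with h | h | h
      · simp only [if_pos (le_of_lt h), if_pos (by omega : j + 1 ≤ i₀)]
        exact hedges j (by omega)
      · subst h
        simp only [if_pos (le_refl j), if_neg (by omega : ¬ j + 1 ≤ j)]
        rw [hi₀]
        have := hedges (j+1) (by omega)
        rcases this with h' | h'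
        · exact Or.inl h'
        · exact Or.inr h'
      · simp only [if_neg (by omega : ¬ j ≤ i₀), if_neg (by omega : ¬ j + 1 ≤ i₀)]
        exact hedges (j+1) (by omega)
    · rcases lt_trichotomy i₁ i₀ with h | h | h
      · exact ⟨i₁, by omega,
          by simp only [if_pos (le_of_lt h), if_pos (by omega : i₁ + 1 ≤ i₀)]; exact hi₁⟩
      · exact absurd h hi₁0
      · refine ⟨i₁ - 1, by omega, ?_⟩
        rcases eq_or_lt_of_le (by omega : i₀ + 1 ≤ i₁) with h' | h'
        · -- i₁ = i₀ + 1
          have hj : i₁ - 1 = i₀ := by omega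
          rw [hj]
          simp only [if_pos (le_refl i₀), if_neg (by omega : ¬ i₀ + 1 ≤ i₀)]
          rw [hi₀]
          subst h'
          exact hi₁
        · simp only [if_neg (by omega : ¬ i₁ - 1 ≤ i₀), if_neg (by omega : ¬ i₁ - 1 + 1 ≤ i₀)]
          have h1 : i₁ - 1 + 1 = i₁ := by omega
          rw [h1]
          exact hi₁
  -- no genuine closed walk with at least one real edge
  have noCycle : ∀ N : ℕ, ∀ x : ℕ → Ω, x N = x 0 →
      (∀ i, i < N → x i = x (i+1) ∨ (x i, x (i+1)) ∈ O) →
      (∃ i, i < N ∧ (x i, x (i+1)) ∈ O) → False := by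
    intro N
    induction N using Nat.strong_induction_on with
    | _ N IH =>
      intro x hclose hedges hreal
      by_cases hcol : ∃ i, i < N ∧ x i = x (i+1)
      · obtain ⟨y, h1, h2, h3⟩ := shrink N x hclose hedges hreal hcol
        obtain ⟨i₁, hi₁N, -⟩ := hreal
        exact IH (N-1) (by omega) y h1 h2 h3
      · push_neg at hcol
        have hall : ∀ i, i < N → (x i, x (i+1)) ∈ O := by
          intro i hi
          rcases hedges i hi with h | h
          · exact absurd h (hcol i hi)
          · exact h
        obtain ⟨i₁, hi₁N, -⟩ := hreal
        rcases eq_or_lt_of_le (by omega : 1 ≤ N) with hN | hN2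
        · -- N = 1 : loop
          have h0 : (x 0, x 1) ∈ O := hall 0 (by omega)
          have hx : x 1 = x 0 := by rw [← hN] at hclose; exact hclose
          exact hne _ _ h0 hx.symm
        · -- N ≥ 2
          obtain ⟨-, u, huS, hu⟩ := (hmem _ _).mp (hall 0 (by omega))
          simp only [Prod.mk.injEq] at hu
          obtain ⟨⟨v, hvS, hv⟩, -⟩ := (hmem _ _).mp (hall 1 (by omega))
          simp only [Prod.mk.injEq] at hv
          set t := v ∘ u with htdef
          have htS : t ∈ S := hcomp u huS v hvS
          have ht0 : t (x 0) = x 1 := by simp only [htdef, Function.comp_apply, hu.1, hv.1]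
          have ht1 : t (x 1) = x 2 := by simp only [htdef, Function.comp_apply, hu.2, hv.2]
          obtain ⟨k, -, hk⟩ := haper t htS
          have hPex : ∃ j : ℕ, ∃ i, i < N ∧ t^[j] (x i) = t^[j] (x (i+1)) := by
            refine ⟨k, 0, by omega, ?_⟩
            calc t^[k] (x 0) = t^[k+1] (x 0) := by rw [hk]
            _ = t^[k] (t (x 0)) := by rw [Function.iterate_succ_apply]
            _ = t^[k] (x (0+1)) := by rw [ht0]
          have hjpos : 1 ≤ Nat.find hPex := by
            rcases Nat.eq_zero_or_pos (Nat.find hPex) with h | h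
            · exfalso
              have hs := Nat.find_spec hPex
              rw [h] at hs
              obtain ⟨i, hiN, hi⟩ := hs
              simp only [Function.iterate_zero, id_eq] at hi
              exact hne _ _ (hall i hiN) hi
            · exact h
          obtain ⟨i₀, hi₀N, hi₀⟩ := Nat.find_spec hPex
          set J := Nat.find hPex - 1 with hJ
          have hnocol := Nat.find_min hPex (by omega : J < Nat.find hPex)
          push_neg at hnocol
          set z : ℕ → Ω := fun i => t^[J] (x i) with hz
          have hzne : ∀ i, i < N → z i ≠ z (i+1) := fun i hi => hnocol i hi
          have hzO : ∀ i, i < N → (z i, z (i+1)) ∈ O := fun i hi =>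
            hmapO _ _ (hall i hi) _ (hiter t htS J) (hzne i hi)
          have hz1 : z 1 = t (z 0) := by
            show t^[J] (x 1) = t (t^[J] (x 0))
            rw [← ht0, ← Function.iterate_succ_apply, Function.iterate_succ_apply']
          have hz2 : z 2 = t (z 1) := by
            show t^[J] (x 2) = t (t^[J] (x 1))
            rw [← ht1, ← Function.iterate_succ_apply, Function.iterate_succ_apply']
          have hcolz : t (z i₀) = t (z (i₀+1)) := by
            show t (t^[J] (x i₀)) = t (t^[J] (x (i₀+1)))
            have e1 : t (t^[J] (x i₀)) = t^[J+1] (x i₀) :=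
              (Function.iterate_succ_apply' t J (x i₀)).symm
            have e2 : t (t^[J] (x (i₀+1))) = t^[J+1] (x (i₀+1)) :=
              (Function.iterate_succ_apply' t J (x (i₀+1))).symm
            have hJ1 : J + 1 = Nat.find hPex := by omega
            rw [e1, e2, hJ1]
            exact hi₀
          by_cases hA : ∀ i, i < N → t (z i) = t (z (i+1))
          · -- total collapse: contradiction with genuine edge (z 1, z 2)
            have h01 : t (z 0) = t (z 1) := hA 0 (by omega)
            have hcontra : z 1 = z (1+1) := by
              show z 1 = z 2
              rw [hz2, ← h01, ← hz1]
            exact hzne 1 (by omega) hcontra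
          · push_neg at hA
            obtain ⟨i₂, hi₂N, hi₂⟩ := hA
            have hyclose : t (z N) = t (z 0) := by
              show t (t^[J] (x N)) = t (t^[J] (x 0))
              rw [hclose]
            obtain ⟨w, h1, h2, h3⟩ := shrink N (fun i => t (z i)) hyclose
              (by
                intro i hi
                by_cases h : t (z i) = t (z (i+1))
                · exact Or.inl h
                · exact Or.inr (hmapO _ _ (hzO i hi) t htS h))
              ⟨i₂, hi₂N, hmapO _ _ (hzO i₂ hi₂N) t htS hi₂⟩
              ⟨i₀, hi₀N, hcolz⟩
            exact IH (N-1) (by omega) w h1 h2 h3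
  -- convert the hypothesis to a closed walk
  have hwalk : ∀ a b : Ω, Relation.ReflTransGen (fun a b : Ω => (a, b) ∈ O) b a →
      ∃ (N : ℕ) (x : ℕ → Ω), x 0 = b ∧ x N = a ∧ ∀ i, i < N → (x i, x (i+1)) ∈ O := by
    intro a b h
    induction h with
    | refl => exact ⟨0, fun _ => b, rfl, rfl, fun i hi => absurd hi (by omega)⟩
    | @tail c d hbc hcd ih =>
      obtain ⟨N, x, h0, hN, he⟩ := ih
      refine ⟨N+1, fun i => if i ≤ N then x i else d, ?_, ?_, ?_⟩
      · simp only [if_pos (Nat.zero_le N)]; exact h0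
      · simp only [if_neg (by omega : ¬ N + 1 ≤ N)]
      · intro i hi
        rcases eq_or_lt_of_le (by omega : i + 1 ≤ N + 1) with h' | h'
        · have hiN : i = N := by omega
          subst hiN
          simp only [if_pos (le_refl i), if_neg (by omega : ¬ i + 1 ≤ i)]
          rw [hN]
          exact hcd
        · simp only [if_pos (by omega : i ≤ N), if_pos (by omega : i + 1 ≤ N)]
          exact he i (by omega)
  obtain ⟨N, x, h0, hN, he⟩ := hwalk p.1 p.2 hR
  refine noCycle (N+1) (fun i => if i = 0 then p.1 else x (i-1)) ?_ ?_ ?_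
  · show (if N + 1 = 0 then p.1 else x (N + 1 - 1)) = (if (0:ℕ) = 0 then p.1 else x (0 - 1))
    rw [if_neg (by omega : ¬ N + 1 = 0), if_pos rfl]
    have : N + 1 - 1 = N := by omega
    rw [this, hN]
  · intro i hi
    right
    by_cases h : i = 0
    · subst h
      simp only [if_pos rfl, if_neg (by omega : ¬ (0:ℕ) + 1 = 0)]
      have : (0:ℕ) + 1 - 1 = 0 := by omega
      rw [this, h0]
      exact hp
    · simp only [if_neg h, if_neg (by omega : ¬ i + 1 = 0)]
      have h2 : i + 1 - 1 = i - 1 + 1 := by omega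
      rw [h2]
      exact he (i-1) (by omega)
  · refine ⟨0, by omega, ?_⟩
    simp only [if_pos rfl, if_neg (by omega : ¬ (0:ℕ) + 1 = 0)]
    have : (0:ℕ) + 1 - 1 = 0 := by omega
    rw [this, h0]
    exact hp
end

section
/- Let (Ω,M) be a finite transformation monoid of degree n = |Ω| and min-rank r, and K a field of characteristic zero. For X ⊆ Ω write [X] = Σ_{ω∈X} δ_ω for the indicator vector in KΩ, and let KΩ_r be the K-span of the vectors [X] − [Y] with X, Y ∈ min_M(Ω). Then: (1) KΩ_r is invariant under the right M-action on KΩ; (2) dim_K KΩ_r ≤ n − r; (3) if moreover M is transitive on Ω, then an element m ∈ M annihilates KΩ_r (i.e., v·m = 0 for all v ∈ KΩ_r) if and only if m belongs to the minimal ideal I(M). -/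
/-- The submodule `KΩ_r`: the span of the differences `[X] - [Y]` of indicator vectors
of images `X, Y ∈ min_M(Ω)` of elements of minimal rank `r`. -/
def minRankSpan (Ω K : Type*) [Field K] (S : Set (Ω → Ω)) (r : ℕ) :
    Submodule K (Ω → K) :=
  Submodule.span K
    {v : Ω → K | ∃ m ∈ S, ∃ m' ∈ S, (Set.range m).ncard = r ∧
      (Set.range m').ncard = r ∧
      v = (Set.range m).indicator 1 - (Set.range m').indicator 1}

open Set Function

section Helpers

variable {Ω K : Type*} [Fintype Ω] [DecidableEq Ω] [Field K]

/-- The right action of `m` on `KΩ` as a linear map. -/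
noncomputable def actL (K : Type*) [Field K] {Ω : Type*} [Fintype Ω] [DecidableEq Ω]
    (m : Ω → Ω) : (Ω → K) →ₗ[K] (Ω → K) where
  toFun v := fun ω => ∑ α : Ω, if m α = ω then v α else 0
  map_add' u v := by
    funext ω
    rw [Pi.add_apply, ← Finset.sum_add_distrib]
    refine Finset.sum_congr rfl fun α _ => ?_
    split <;> simp
  map_smul' c v := by
    funext ω
    simp only [RingHom.id_apply, Pi.smul_apply, smul_eq_mul, Finset.mul_sum]
    refine Finset.sum_congr rfl fun α _ => ?_
    split <;> simp

lemma actL_indicator_card (m : Ω → Ω) (X : Set Ω) [DecidablePred (· ∈ X)] (ω : Ω) :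
    actL K m (X.indicator 1) ω
      = ((Finset.univ.filter (fun α => α ∈ X ∧ m α = ω)).card : K) := by
  rw [← Finset.sum_boole]
  show (∑ α : Ω, if m α = ω then X.indicator 1 α else 0) = _
  refine Finset.sum_congr rfl fun α _ => ?_
  by_cases h1 : m α = ω <;> by_cases h2 : α ∈ X <;>
    simp [h1, h2, Set.indicator_apply]

end Helpers

section Helpers2

variable {Ω K : Type*} [Fintype Ω] [DecidableEq Ω] [Field K]

lemma actL_indicator_of_injOn (m : Ω → Ω) (X : Set Ω) (h : Set.InjOn m X) :
    actL K m (X.indicator 1) = (m '' X).indicator 1 := by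
  classical
  funext ω
  rw [actL_indicator_card]
  by_cases hω : ω ∈ m '' X
  · obtain ⟨α₀, hα₀, rfl⟩ := hω
    rw [Set.indicator_of_mem (Set.mem_image_of_mem m hα₀), Pi.one_apply]
    rw [show (Finset.univ.filter (fun α => α ∈ X ∧ m α = m α₀)) = {α₀} from ?_]
    · simp
    · ext α
      simp only [Finset.mem_filter, Finset.mem_univ, true_and, Finset.mem_singleton]
      constructor
      · rintro ⟨hα, hm⟩; exact h hα hα₀ hm
      · rintro rfl; exact ⟨hα₀, rfl⟩
  · rw [Set.indicator_of_notMem hω]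
    rw [show (Finset.univ.filter (fun α => α ∈ X ∧ m α = ω)) = ∅ from ?_]
    · simp
    · rw [Finset.filter_eq_empty_iff]
      rintro α _ ⟨hα, hm⟩
      exact hω ⟨α, hα, hm⟩

lemma actL_indicator_ne_zero [CharZero K] (m : Ω → Ω) (X : Set Ω) {β : Ω} (hβ : β ∈ X) :
    actL K m (X.indicator (1 : Ω → K)) (m β) ≠ 0 := by
  classical
  rw [actL_indicator_card]
  have hc : 0 < (Finset.univ.filter (fun α => α ∈ X ∧ m α = m β)).card :=
    Finset.card_pos.mpr ⟨β, by simp [hβ]⟩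
  exact_mod_cast Nat.pos_iff_ne_zero.mp hc

lemma exists_preimage_of_actL_ne_zero [CharZero K] (m : Ω → Ω) (X : Set Ω) (ω : Ω)
    (h : actL K m (X.indicator (1 : Ω → K)) ω ≠ 0) : ∃ α ∈ X, m α = ω := by
  classical
  rw [actL_indicator_card] at h
  have h' := Nat.cast_ne_zero.mp h
  obtain ⟨α, hα⟩ := Finset.card_pos.mp (Nat.pos_of_ne_zero h')
  simp only [Finset.mem_filter, Finset.mem_univ, true_and] at hα
  exact ⟨α, hα.1, hα.2⟩

lemma exists_iterate_fix {f : Ω → Ω} {X : Set Ω} (hfX : f '' X = X) :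
    ∃ k, 1 ≤ k ∧ ∀ x ∈ X, f^[k] x = x := by
  have himage : ∀ i, f^[i] '' X = X := by
    intro i; induction i with
    | zero => simp
    | succ i ih => rw [Function.iterate_succ', Set.image_comp, ih, hfX]
  obtain ⟨i, j, hne, hij⟩ := Finite.exists_ne_map_eq_of_infinite (fun n : ℕ => f^[n])
  rcases hne.lt_or_gt with h | h
  · refine ⟨j - i, by omega, fun x hx => ?_⟩
    obtain ⟨y, hy, rfl⟩ : x ∈ f^[i] '' X := (himage i).symm ▸ hx
    rw [← Function.iterate_add_apply, Nat.sub_add_cancel h.le, hij]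
  · refine ⟨i - j, by omega, fun x hx => ?_⟩
    obtain ⟨y, hy, rfl⟩ : x ∈ f^[j] '' X := (himage j).symm ▸ hx
    rw [← Function.iterate_add_apply, Nat.sub_add_cancel h.le, ← hij]

end Helpers2

set_option linter.unusedSectionVars false

section Monoid

variable {Ω K : Type*} [Fintype Ω] [DecidableEq Ω] [Field K]
variable {S : Set (Ω → Ω)} {r : ℕ}

lemma iterate_mem (hid : id ∈ S) (hcomp : ∀ m ∈ S, ∀ n ∈ S, n ∘ m ∈ S)
    {m : Ω → Ω} (hm : m ∈ S) : ∀ k, m^[k] ∈ S := by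
  intro k
  induction k with
  | zero => simpa using hid
  | succ k ih => rw [Function.iterate_succ]; exact hcomp m hm _ ih

lemma rank_image (hcomp : ∀ m ∈ S, ∀ n ∈ S, n ∘ m ∈ S)
    (hle : ∀ m ∈ S, r ≤ (Set.range m).ncard)
    {m q : Ω → Ω} (hm : m ∈ S) (hq : q ∈ S) (hqr : (Set.range q).ncard = r) :
    (m '' Set.range q).ncard = r ∧ Set.InjOn m (Set.range q) := by
  have h1 : Set.range (m ∘ q) = m '' Set.range q := Set.range_comp m q
  have h2 : r ≤ (m '' Set.range q).ncard := h1 ▸ hle _ (hcomp q hq m hm)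
  have h3 : (m '' Set.range q).ncard ≤ r := hqr ▸ Set.ncard_image_le
  have h4 : (m '' Set.range q).ncard = r := le_antisymm h3 h2
  exact ⟨h4, Set.injOn_of_ncard_image_eq (h4.trans hqr.symm)⟩

lemma image_eq_range (hcomp : ∀ m ∈ S, ∀ n ∈ S, n ∘ m ∈ S)
    (hle : ∀ m ∈ S, r ≤ (Set.range m).ncard)
    {m q : Ω → Ω} (hm : m ∈ S) (hmr : (Set.range m).ncard = r)
    (hq : q ∈ S) (hqr : (Set.range q).ncard = r) :
    m '' Set.range q = Set.range m := by
  refine Set.eq_of_subset_of_ncard_le (Set.image_subset_range m _) ?_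
  rw [hmr, (rank_image hcomp hle hm hq hqr).1]

/-- Minimal-rank elements annihilate the span. -/
lemma actL_eq_zero_of_minrank (hcomp : ∀ m ∈ S, ∀ n ∈ S, n ∘ m ∈ S)
    (hle : ∀ m ∈ S, r ≤ (Set.range m).ncard)
    {m : Ω → Ω} (hm : m ∈ S) (hmr : (Set.range m).ncard = r) :
    ∀ v ∈ minRankSpan Ω K S r, actL K m v = 0 := by
  intro v hv
  have hker : minRankSpan Ω K S r ≤ LinearMap.ker (actL K m) := by
    rw [minRankSpan, Submodule.span_le]
    rintro v ⟨q, hq, q', hq', hqr, hq'r, rfl⟩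
    simp only [SetLike.mem_coe, LinearMap.mem_ker, map_sub]
    rw [actL_indicator_of_injOn _ _ (rank_image hcomp hle hm hq hqr).2,
        actL_indicator_of_injOn _ _ (rank_image hcomp hle hm hq' hq'r).2,
        image_eq_range hcomp hle hm hmr hq hqr,
        image_eq_range hcomp hle hm hmr hq' hq'r, sub_self]
  exact LinearMap.mem_ker.mp (hker hv)

/-- Invariance of the span under the action. -/
lemma actL_mem_span (hcomp : ∀ m ∈ S, ∀ n ∈ S, n ∘ m ∈ S)
    (hle : ∀ m ∈ S, r ≤ (Set.range m).ncard)
    {m : Ω → Ω} (hm : m ∈ S) :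
    ∀ v ∈ minRankSpan Ω K S r, actL K m v ∈ minRankSpan Ω K S r := by
  intro v hv
  have hsub : minRankSpan Ω K S r ≤ (minRankSpan Ω K S r).comap (actL K m) := by
    nth_rewrite 1 [minRankSpan]
    rw [Submodule.span_le]
    rintro v ⟨q, hq, q', hq', hqr, hq'r, rfl⟩
    simp only [SetLike.mem_coe, Submodule.mem_comap, map_sub]
    rw [actL_indicator_of_injOn _ _ (rank_image hcomp hle hm hq hqr).2,
        actL_indicator_of_injOn _ _ (rank_image hcomp hle hm hq' hq'r).2]
    apply Submodule.subset_span
    refine ⟨m ∘ q, hcomp q hq m hm, m ∘ q', hcomp q' hq' m hm, ?_, ?_, ?_⟩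
    · rw [Set.range_comp]; exact (rank_image hcomp hle hm hq hqr).1
    · rw [Set.range_comp]; exact (rank_image hcomp hle hm hq' hq'r).1
    · rw [Set.range_comp, Set.range_comp]
  exact hsub hv

/-- Any two minimal-rank elements generate each other up to S on both sides. -/
lemma exists_factor (hid : id ∈ S) (hcomp : ∀ m ∈ S, ∀ n ∈ S, n ∘ m ∈ S)
    (hle : ∀ m ∈ S, r ≤ (Set.range m).ncard)
    {m p : Ω → Ω} (hm : m ∈ S) (hp : p ∈ S)
    (hmr : (Set.range m).ncard = r) (hpr : (Set.range p).ncard = r) :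
    ∃ w ∈ S, ∀ α, w (p (m α)) = m α := by
  set σ := m ∘ p with hσ
  have hσS : σ ∈ S := hcomp p hp m hm
  have hσX : σ '' Set.range m = Set.range m := by
    rw [hσ, Set.image_comp, image_eq_range hcomp hle hp hpr hm hmr,
      image_eq_range hcomp hle hm hmr hp hpr]
  obtain ⟨k, hk1, hkfix⟩ := exists_iterate_fix hσX
  refine ⟨σ^[k - 1] ∘ m, hcomp m hm _ (iterate_mem hid hcomp hσS (k - 1)), fun α => ?_⟩
  have : σ^[k - 1] (m (p (m α))) = σ^[k - 1] (σ (m α)) := rfl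
  show σ^[k - 1] (m (p (m α))) = m α
  rw [this, ← Function.iterate_succ_apply, Nat.succ_eq_add_one, Nat.sub_add_cancel hk1]
  exact hkfix (m α) (Set.mem_range_self α)

/-- Minimal-rank elements lie in the minimal ideal. -/
lemma minrank_mem_ideal (hid : id ∈ S) (hcomp : ∀ m ∈ S, ∀ n ∈ S, n ∘ m ∈ S)
    (hle : ∀ m ∈ S, r ≤ (Set.range m).ncard)
    {m : Ω → Ω} (hm : m ∈ S) (hmr : (Set.range m).ncard = r) :
    ∀ n ∈ S, ∃ u ∈ S, ∃ w ∈ S, m = w ∘ n ∘ u := by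
  intro n hn
  have hpS : m ∘ n ∈ S := hcomp n hn m hm
  have hpr : (Set.range (m ∘ n)).ncard = r := by
    refine le_antisymm ?_ (hle _ hpS)
    calc (Set.range (m ∘ n)).ncard ≤ (Set.range m).ncard := by
          refine Set.ncard_le_ncard ?_ (Set.toFinite _)
          rw [Set.range_comp]; exact Set.image_subset_range m _
      _ = r := hmr
  obtain ⟨w, hw, hwp⟩ := exists_factor hid hcomp hle hm hpS hmr hpr
  refine ⟨m, hm, w ∘ m, hcomp m hm w hw, ?_⟩
  funext α
  exact (hwp α).symm

lemma minrank_of_mem_ideal (hcomp : ∀ m ∈ S, ∀ n ∈ S, n ∘ m ∈ S)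
    (hle : ∀ m ∈ S, r ≤ (Set.range m).ncard)
    {m m₀ : Ω → Ω} (hm : m ∈ S) (hm₀ : m₀ ∈ S) (hm₀r : (Set.range m₀).ncard = r)
    (h : ∃ u ∈ S, ∃ w ∈ S, m = w ∘ m₀ ∘ u) :
    (Set.range m).ncard = r := by
  obtain ⟨u, hu, w, hw, rfl⟩ := h
  refine le_antisymm ?_ (hle _ (hcomp _ (hcomp u hu m₀ hm₀) w hw))
  calc (Set.range (w ∘ m₀ ∘ u)).ncard ≤ (w '' Set.range m₀).ncard := by
        refine Set.ncard_le_ncard ?_ (Set.toFinite _)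
        rintro _ ⟨α, rfl⟩
        exact ⟨m₀ (u α), Set.mem_range_self _, rfl⟩
    _ = r := (rank_image hcomp hle hw hm₀ hm₀r).1

/-- Transitivity: annihilating elements have minimal rank. -/
lemma minrank_of_annihilates [CharZero K]
    (hcomp : ∀ m ∈ S, ∀ n ∈ S, n ∘ m ∈ S)
    (hle : ∀ m ∈ S, r ≤ (Set.range m).ncard)
    {m₀ : Ω → Ω} (hm₀ : m₀ ∈ S) (hm₀r : (Set.range m₀).ncard = r)
    (htrans : ∀ α β : Ω, ∃ m ∈ S, m α = β)
    {m : Ω → Ω} (hm : m ∈ S)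
    (hann : ∀ v ∈ minRankSpan Ω K S r, actL K m v = 0) :
    (Set.range m).ncard = r := by
  refine le_antisymm ?_ (hle m hm)
  have hsub : Set.range m ⊆ m '' Set.range m₀ := by
    rintro _ ⟨β, rfl⟩
    obtain ⟨u, hu, hux⟩ := htrans (m₀ β) β
    have huS : u ∘ m₀ ∈ S := hcomp m₀ hm₀ u hu
    have hXβ : (Set.range (u ∘ m₀)).ncard = r := by
      rw [Set.range_comp]; exact (rank_image hcomp hle hu hm₀ hm₀r).1
    have hβX : β ∈ Set.range (u ∘ m₀) := ⟨β, by simp [hux]⟩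
    have h0 := hann _ (Submodule.subset_span ⟨u ∘ m₀, huS, m₀, hm₀, hXβ, hm₀r, rfl⟩)
    rw [map_sub, sub_eq_zero] at h0
    have hne : actL K m ((Set.range (u ∘ m₀)).indicator (1 : Ω → K)) (m β) ≠ 0 :=
      actL_indicator_ne_zero m _ hβX
    rw [h0] at hne
    obtain ⟨α, hα, hαm⟩ := exists_preimage_of_actL_ne_zero m _ _ hne
    exact ⟨α, hα, hαm⟩
  calc (Set.range m).ncard ≤ (m '' Set.range m₀).ncard :=
        Set.ncard_le_ncard hsub (Set.toFinite _)
    _ ≤ (Set.range m₀).ncard := Set.ncard_image_le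
    _ = r := hm₀r

lemma actL_single (m : Ω → Ω) (α : Ω) :
    actL K m (Pi.single α (1 : K)) = Pi.single (m α) 1 := by
  have h1 : (Pi.single α (1 : K)) = Set.indicator {α} (1 : Ω → K) := by
    funext ω
    simp [Pi.single_apply, Set.indicator_apply]
  rw [h1, actL_indicator_of_injOn m _ (Set.injOn_singleton m α), Set.image_singleton]
  funext ω
  simp [Pi.single_apply, Set.indicator_apply]

lemma dim_bound (hcomp : ∀ m ∈ S, ∀ n ∈ S, n ∘ m ∈ S)
    (hle : ∀ m ∈ S, r ≤ (Set.range m).ncard)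
    {m₀ : Ω → Ω} (hm₀ : m₀ ∈ S) (hm₀r : (Set.range m₀).ncard = r) :
    Module.finrank K (minRankSpan Ω K S r) ≤ Fintype.card Ω - r := by
  set L := actL K m₀ with hL
  have hker : minRankSpan Ω K S r ≤ LinearMap.ker L := fun v hv =>
    LinearMap.mem_ker.mpr (actL_eq_zero_of_minrank hcomp hle hm₀ hm₀r v hv)
  -- the rank of L is at least r
  have hmem : ∀ x : Set.range m₀, Pi.single (x : Ω) (1 : K) ∈ LinearMap.range L := by
    rintro ⟨_, α, rfl⟩
    exact ⟨Pi.single α 1, actL_single m₀ α⟩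
  have hind : LinearIndependent K (fun x : Set.range m₀ =>
      (⟨Pi.single (x : Ω) (1 : K), hmem x⟩ : LinearMap.range L)) := by
    apply LinearIndependent.of_comp (LinearMap.range L).subtype
    have h2 := (Pi.basisFun K Ω).linearIndependent.comp
      (fun x : Set.range m₀ => (x : Ω)) Subtype.val_injective
    simpa [Function.comp_def, Pi.basisFun_apply] using h2
  have hrange : r ≤ Module.finrank K (LinearMap.range L) := by
    have hc := hind.fintype_card_le_finrank
    have hcard : Fintype.card (Set.range m₀) = r := by
      rw [← Nat.card_eq_fintype_card, Nat.card_coe_set_eq, hm₀r]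
    omega
  have hrn := LinearMap.finrank_range_add_finrank_ker L
  rw [Module.finrank_fintype_fun_eq_card] at hrn
  have h1 : Module.finrank K (minRankSpan Ω K S r) ≤ Module.finrank K (LinearMap.ker L) :=
    Submodule.finrank_mono hker
  omega

end Monoid

/-- Let `(Ω, M)` be a finite transformation monoid of degree
`n = |Ω|` and min-rank `r`, `K` a field of characteristic zero.  Then: (1) `KΩ_r` is
invariant under the right `M`-action `(v·m)(ω) = ∑_{α : αm = ω} v α`;
(2) `dim_K KΩ_r ≤ n - r`; (3) if `M` is transitive, then `m ∈ M` annihilates `KΩ_r`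
iff `m` lies in the minimal ideal `I(M)`. -/
theorem minRankSpan_properties {Ω K : Type*} [Fintype Ω] [DecidableEq Ω] [Field K]
    [CharZero K]
    (S : Set (Ω → Ω)) (hid : id ∈ S) (hcomp : ∀ m ∈ S, ∀ n ∈ S, n ∘ m ∈ S)
    (r : ℕ) (hmin : ∃ m ∈ S, (Set.range m).ncard = r)
    (hle : ∀ m ∈ S, r ≤ (Set.range m).ncard) :
    (∀ m ∈ S, ∀ v ∈ minRankSpan Ω K S r,
      (fun ω : Ω => ∑ α : Ω, if m α = ω then v α else 0) ∈ minRankSpan Ω K S r) ∧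
    Module.finrank K (minRankSpan Ω K S r) ≤ Fintype.card Ω - r ∧
    ((∀ α β : Ω, ∃ m ∈ S, m α = β) →
      ∀ m ∈ S,
        ((∀ v ∈ minRankSpan Ω K S r,
            (fun ω : Ω => ∑ α : Ω, if m α = ω then v α else 0) = 0) ↔
          (∀ n ∈ S, ∃ u ∈ S, ∃ w ∈ S, m = w ∘ n ∘ u))) := by
  obtain ⟨m₀, hm₀, hm₀r⟩ := hmin
  refine ⟨?_, dim_bound hcomp hle hm₀ hm₀r, ?_⟩
  · intro m hm v hv
    exact actL_mem_span hcomp hle hm v hv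
  · intro htrans m hm
    constructor
    · intro hann
      have hmr : (Set.range m).ncard = r :=
        minrank_of_annihilates hcomp hle hm₀ hm₀r htrans hm (fun v hv => hann v hv)
      exact minrank_mem_ideal hid hcomp hle hm hmr
    · intro hideal v hv
      have hmr : (Set.range m).ncard = r :=
        minrank_of_mem_ideal hcomp hle hm hm₀ hm₀r (hideal m₀ hm₀)
      exact actL_eq_zero_of_minrank hcomp hle hm hmr v hv
end

section
/- Let (Ω,M) be a finite transformation monoid and K a field of characteristic zero, and suppose (Ω,M) is a KI-monoid: the augmentation submodule Aug(KΩ) = {v : Ω → K : Σ_{ω} v(ω) = 0} has no M-invariant K-subspace other than 0 and itself (with respect to the right M-action (v·m)(ω) = Σ_{α : αm = ω} v(α)). Then: (1) (Ω,M) is primitive; (2) if in addition (Ω,M) is transitive, then either every element of M is a bijection of Ω (M is a permutation group) or M contains a constant map. -/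
/-- The augmentation submodule `Aug(KΩ) = {v : Ω → K | ∑_ω v ω = 0}`. -/
def augSubmodule (Ω K : Type*) [Fintype Ω] [Field K] : Submodule K (Ω → K) where
  carrier := {v | ∑ ω : Ω, v ω = 0}
  add_mem' := by
    intro a b ha hb
    simp only [Set.mem_setOf_eq, Pi.add_apply, Finset.sum_add_distrib] at *
    rw [ha, hb, add_zero]
  zero_mem' := by simp
  smul_mem' := by
    intro c v hv
    simp only [Set.mem_setOf_eq, Pi.smul_apply, smul_eq_mul, ← Finset.mul_sum] at *
    rw [hv, mul_zero]

section KIAux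

variable {Ω K : Type*} [Fintype Ω] [DecidableEq Ω] [Field K]

/-- The right action operator `T_m` on `KΩ`. -/
def Tact (K : Type*) [Field K] {Ω : Type*} [Fintype Ω] [DecidableEq Ω] (m : Ω → Ω) :
    (Ω → K) →ₗ[K] (Ω → K) where
  toFun v := fun ω => ∑ α : Ω, if m α = ω then v α else 0
  map_add' u v := by
    funext ω
    rw [Pi.add_apply, ← Finset.sum_add_distrib]
    exact Finset.sum_congr rfl fun α _ => by by_cases h : m α = ω <;> simp [h]
  map_smul' c v := by
    funext ω
    simp only [RingHom.id_apply, Pi.smul_apply, smul_eq_mul, Finset.mul_sum]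
    exact Finset.sum_congr rfl fun α _ => by by_cases h : m α = ω <;> simp [h]

/-- Dirac function at `a`. -/
def dlt (K : Type*) [Field K] {Ω : Type*} [DecidableEq Ω] (a : Ω) : Ω → K :=
  fun ω => if a = ω then 1 else 0

/-- Indicator function of a finset. -/
def ind (K : Type*) [Field K] {Ω : Type*} [DecidableEq Ω] (s : Finset Ω) : Ω → K :=
  fun ω => if ω ∈ s then 1 else 0

/-- The linear functional summing values over a predicate. -/
def phiL (K : Type*) [Field K] {Ω : Type*} [Fintype Ω] (p : Ω → Prop) [DecidablePred p] :
    (Ω → K) →ₗ[K] K where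
  toFun v := ∑ ω : Ω, if p ω then v ω else 0
  map_add' u v := by
    rw [← Finset.sum_add_distrib]
    exact Finset.sum_congr rfl fun ω _ => by by_cases h : p ω <;> simp [h]
  map_smul' c v := by
    simp only [RingHom.id_apply, smul_eq_mul, Finset.mul_sum]
    exact Finset.sum_congr rfl fun ω _ => by by_cases h : p ω <;> simp [h]

lemma sum_dlt (a : Ω) : ∑ ω : Ω, dlt K a ω = 1 := by
  simp [dlt]

lemma sum_ind (s : Finset Ω) : ∑ ω : Ω, ind K s ω = (s.card : K) := by
  unfold ind
  rw [Finset.sum_boole]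
  have h : Finset.univ.filter (fun ω : Ω => ω ∈ s) = s := by
    ext ω; simp
  rw [h]

lemma Tact_dlt (m : Ω → Ω) (a : Ω) : Tact K m (dlt K a) = dlt K (m a) := by
  funext ω
  show (∑ α : Ω, if m α = ω then dlt K a α else 0) = dlt K (m a) ω
  rw [Finset.sum_congr rfl (fun α _ => show (if m α = ω then dlt K a α else 0)
      = (if a = α then (if m α = ω then (1 : K) else 0) else 0) by
    unfold dlt; by_cases h : a = α <;> by_cases h2 : m α = ω <;> simp [h, h2])]
  rw [Finset.sum_ite_eq]
  simp [dlt]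

lemma Tact_ind (m : Ω → Ω) (s : Finset Ω) (hinj : Set.InjOn m ↑s) :
    Tact K m (ind K s) = ind K (s.image m) := by
  funext ω
  show (∑ α : Ω, if m α = ω then ind K s α else 0) = ind K (s.image m) ω
  rw [Finset.sum_congr rfl (fun α _ => show (if m α = ω then ind K s α else 0)
      = (if α ∈ s ∧ m α = ω then (1 : K) else 0) by
    unfold ind; by_cases h : α ∈ s <;> by_cases h2 : m α = ω <;> simp [h, h2])]
  rw [Finset.sum_boole]
  have hfe : Finset.univ.filter (fun α => α ∈ s ∧ m α = ω) = s.filter (fun α => m α = ω) := by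
    ext β; simp
  rw [hfe]
  unfold ind
  by_cases hω : ω ∈ s.image m
  · obtain ⟨α₀, hα₀, rfl⟩ := Finset.mem_image.mp hω
    have hone : s.filter (fun α => m α = m α₀) = {α₀} := by
      ext β
      simp only [Finset.mem_filter, Finset.mem_singleton]
      constructor
      · rintro ⟨hβ, he⟩
        exact hinj (Finset.mem_coe.mpr hβ) (Finset.mem_coe.mpr hα₀) he
      · rintro rfl; exact ⟨hα₀, rfl⟩
    rw [hone, if_pos hω]
    simp
  · have hnone : s.filter (fun α => m α = ω) = ∅ := by
      ext β
      simp only [Finset.mem_filter, Finset.notMem_empty, iff_false, not_and]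
      intro hβ he
      exact hω (Finset.mem_image.mpr ⟨β, hβ, he⟩)
    rw [hnone, if_neg hω]
    simp

lemma phiL_dlt (p : Ω → Prop) [DecidablePred p] (a : Ω) :
    phiL K p (dlt K a) = if p a then 1 else 0 := by
  show (∑ ω : Ω, if p ω then dlt K a ω else 0) = _
  rw [Finset.sum_congr rfl (fun ω _ => show (if p ω then dlt K a ω else 0)
      = (if a = ω then (if p ω then (1 : K) else 0) else 0) by
    unfold dlt; by_cases h : a = ω <;> by_cases h2 : p ω <;> simp [h, h2])]
  rw [Finset.sum_ite_eq]
  simp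

lemma phiL_ind (p : Ω → Prop) [DecidablePred p] (s : Finset Ω) :
    phiL K p (ind K s) = ((s.filter p).card : K) := by
  show (∑ ω : Ω, if p ω then ind K s ω else 0) = _
  rw [Finset.sum_congr rfl (fun ω _ => show (if p ω then ind K s ω else 0)
      = (if ω ∈ s ∧ p ω then (1 : K) else 0) by
    unfold ind; by_cases h : ω ∈ s <;> by_cases h2 : p ω <;> simp [h, h2])]
  rw [Finset.sum_boole]
  have h : Finset.univ.filter (fun ω : Ω => ω ∈ s ∧ p ω) = s.filter p := by
    ext β; simp
  rw [h]

lemma span_Tact_invariant {G : Set (Ω → K)} {m : Ω → Ω}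
    (h : ∀ g ∈ G, Tact K m g ∈ Submodule.span K G) :
    ∀ v ∈ Submodule.span K G, Tact K m v ∈ Submodule.span K G := by
  intro v hv
  have h2 : Submodule.span K G ≤ (Submodule.span K G).comap (Tact K m) := by
    rw [Submodule.span_le]
    intro g hg
    exact h g hg
  exact h2 hv

end KIAux

/-- Let `(Ω, M)` be a finite transformation monoid, `K` a field of
characteristic zero, and suppose `(Ω, M)` is a `KI`-monoid: the only `M`-invariant
subspaces of `Aug(KΩ)` (for the right action `(v·m)(ω) = ∑_{α : αm = ω} v α`) are `0`
and `Aug(KΩ)` itself.  Then (1) `(Ω, M)` is primitive, and (2) if moreover `(Ω, M)` is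
transitive, then either every element of `M` is a bijection of `Ω` or `M` contains a
constant map. -/
theorem KI_monoid_primitive {Ω K : Type*} [Fintype Ω] [DecidableEq Ω] [Field K]
    [CharZero K]
    (S : Set (Ω → Ω)) (hid : id ∈ S) (hcomp : ∀ m ∈ S, ∀ n ∈ S, n ∘ m ∈ S)
    (hKI : ∀ V : Submodule K (Ω → K), V ≤ augSubmodule Ω K →
      (∀ v ∈ V, ∀ m ∈ S, (fun ω : Ω => ∑ α : Ω, if m α = ω then v α else 0) ∈ V) →
      V = ⊥ ∨ V = augSubmodule Ω K) :
    (∀ r : Ω → Ω → Prop, Equivalence r →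
      (∀ a b : Ω, r a b → ∀ m ∈ S, r (m a) (m b)) →
      (∀ a b : Ω, r a b ↔ a = b) ∨ (∀ a b : Ω, r a b)) ∧
    ((∀ α β : Ω, ∃ m ∈ S, m α = β) →
      (∀ m ∈ S, Function.Bijective m) ∨ ∃ c : Ω, Function.const Ω c ∈ S) := by
  classical
  constructor
  · -- Part 1 : primitivity
    intro r hrE hrC
    set G1 : Set (Ω → K) := {v | ∃ a b, r a b ∧ v = dlt K a - dlt K b} with hG1
    set V := Submodule.span K G1 with hV
    have hgen : ∀ a b : Ω, r a b → dlt K a - dlt K b ∈ V := fun a b hab =>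
      Submodule.subset_span ⟨a, b, hab, rfl⟩
    have hVaug : V ≤ augSubmodule Ω K := by
      rw [hV, Submodule.span_le]
      rintro v ⟨a, b, hab, rfl⟩
      show ∑ ω : Ω, (dlt K a - dlt K b) ω = 0
      simp only [Pi.sub_apply, Finset.sum_sub_distrib, sum_dlt, sub_self]
    have hVinv : ∀ v ∈ V, ∀ m ∈ S, (fun ω : Ω => ∑ α : Ω, if m α = ω then v α else 0) ∈ V := by
      intro v hv m hm
      have : Tact K m v ∈ V := by
        refine span_Tact_invariant ?_ v hv
        rintro g ⟨a, b, hab, rfl⟩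
        rw [map_sub, Tact_dlt, Tact_dlt]
        exact hgen _ _ (hrC a b hab m hm)
      exact this
    rcases hKI V hVaug hVinv with h0 | hAug
    · left
      intro a b
      constructor
      · intro hab
        by_contra hne
        have hmem := hgen a b hab
        rw [h0, Submodule.mem_bot] at hmem
        have h1 := congrFun hmem a
        have hba : ¬ (b = a) := fun h => hne h.symm
        simp [dlt, hba] at h1
      · rintro rfl; exact hrE.refl a
    · right
      intro a b
      by_contra hab
      have hker : V ≤ LinearMap.ker (phiL K (r a)) := by
        rw [hV, Submodule.span_le]
        rintro v ⟨x, y, hxy, rfl⟩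
        simp only [SetLike.mem_coe, LinearMap.mem_ker, map_sub, phiL_dlt]
        have hiff : r a x ↔ r a y :=
          ⟨fun h => hrE.trans h hxy, fun h => hrE.trans h (hrE.symm hxy)⟩
        by_cases hx : r a x
        · rw [if_pos hx, if_pos (hiff.mp hx), sub_self]
        · rw [if_neg hx, if_neg (fun hy => hx (hiff.mpr hy)), sub_self]
      have hmem : dlt K a - dlt K b ∈ V := by
        rw [hAug]
        show ∑ ω : Ω, (dlt K a - dlt K b) ω = 0
        simp only [Pi.sub_apply, Finset.sum_sub_distrib, sum_dlt, sub_self]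
      have h1 := hker hmem
      rw [LinearMap.mem_ker, map_sub, phiL_dlt, phiL_dlt, if_pos (hrE.refl a),
        if_neg hab] at h1
      simp at h1
  · -- Part 2 : transitive implies group or constant
    intro htrans
    by_cases hb : ∀ m ∈ S, Function.Bijective m
    · exact Or.inl hb
    push_neg at hb
    obtain ⟨m₁, hm₁S, hm₁⟩ := hb
    have hninj : ¬ Function.Injective m₁ := fun h => hm₁ (Finite.injective_iff_bijective.mp h)
    right
    -- minimal rank setup
    have hex : ∃ k, ∃ m, m ∈ S ∧ (Finset.univ.image m).card = k :=
      ⟨(Finset.univ.image (id : Ω → Ω)).card, id, hid, rfl⟩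
    obtain ⟨r, ⟨x₀, hx₀S, hx₀r⟩, hmin⟩ : ∃ r, (∃ m, m ∈ S ∧ (Finset.univ.image m).card = r) ∧
        ∀ m ∈ S, r ≤ (Finset.univ.image m).card :=
      ⟨Nat.find hex, Nat.find_spec hex, fun m hm => Nat.find_min' hex ⟨m, hm, rfl⟩⟩
    -- composition with a minimal-rank element
    have hkey : ∀ m ∈ S, ∀ y, y ∈ S → (Finset.univ.image y).card = r →
        (m ∘ y) ∈ S ∧ (Finset.univ.image (m ∘ y)).card = r ∧
        Set.InjOn m ↑(Finset.univ.image y) ∧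
        (Finset.univ.image y).image m = Finset.univ.image (m ∘ y) := by
      intro m hm y hy hyr
      have hmem : (m ∘ y) ∈ S := hcomp y hy m hm
      have him : (Finset.univ.image y).image m = Finset.univ.image (m ∘ y) :=
        Finset.image_image
      have hle : (Finset.univ.image (m ∘ y)).card ≤ r := by
        calc (Finset.univ.image (m ∘ y)).card
            = ((Finset.univ.image y).image m).card := by rw [him]
          _ ≤ (Finset.univ.image y).card := Finset.card_image_le
          _ = r := hyr
      have heq : (Finset.univ.image (m ∘ y)).card = r := le_antisymm hle (hmin _ hmem)
      have hinj : Set.InjOn m ↑(Finset.univ.image y) := by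
        apply Finset.injOn_of_card_image_eq
        rw [him]
        exact heq.trans hyr.symm
      exact ⟨hmem, heq, hinj, him⟩
    obtain ⟨a₀, b₀, hab₀, hne₀⟩ := Function.not_injective_iff.mp hninj
    have hr1 : 1 ≤ r := by
      have hne : (Finset.univ.image x₀).Nonempty :=
        ⟨x₀ a₀, Finset.mem_image_of_mem _ (Finset.mem_univ _)⟩
      have h := Finset.card_pos.mpr hne
      omega
    by_cases hrone : r = 1
    · -- a constant map exists
      have hcard1 : (Finset.univ.image x₀).card = 1 := hx₀r.trans hrone
      obtain ⟨c, hc⟩ := Finset.card_eq_one.mp hcard1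
      refine ⟨c, ?_⟩
      have hconst : x₀ = Function.const Ω c := by
        funext α
        have hmem : x₀ α ∈ Finset.univ.image x₀ :=
          Finset.mem_image_of_mem _ (Finset.mem_univ _)
        rw [hc, Finset.mem_singleton] at hmem
        exact hmem
      rwa [← hconst]
    · exfalso
      have hr2 : 2 ≤ r := by omega
      -- r < |Ω|
      have hnsurj : ¬ Function.Surjective m₁ :=
        fun h => hninj (Finite.injective_iff_surjective.mpr h)
      have hτ' : ∃ τ, τ ∉ Finset.univ.image m₁ := by
        rw [Function.Surjective] at hnsurj
        push_neg at hnsurj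
        obtain ⟨τ, hτ⟩ := hnsurj
        refine ⟨τ, fun hmem => ?_⟩
        obtain ⟨α, _, hα⟩ := Finset.mem_image.mp hmem
        exact hτ α hα
      obtain ⟨τ, hτ⟩ := hτ'
      have hrn : r < Fintype.card Ω := by
        have h1 : r ≤ (Finset.univ.image m₁).card := hmin m₁ hm₁S
        have h2 : (Finset.univ.image m₁).card < Fintype.card Ω := by
          rw [← Finset.card_univ]
          exact Finset.card_lt_card ⟨Finset.subset_univ _,
            fun hsub => hτ (hsub (Finset.mem_univ τ))⟩
        omega
      -- the invariant subspace spanned by differences of indicators of minimal ranges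
      set Gs : Set (Ω → K) := {v | ∃ y, (y ∈ S ∧ (Finset.univ.image y).card = r) ∧
        ∃ y', (y' ∈ S ∧ (Finset.univ.image y').card = r) ∧
        v = ind K (Finset.univ.image y) - ind K (Finset.univ.image y')} with hGs
      set Y := Submodule.span K Gs with hY
      have hYaug : Y ≤ augSubmodule Ω K := by
        rw [hY, Submodule.span_le]
        rintro v ⟨y, ⟨hy, hyr⟩, y', ⟨hy', hy'r⟩, rfl⟩
        show ∑ ω : Ω, (ind K (Finset.univ.image y) - ind K (Finset.univ.image y')) ω = 0
        simp only [Pi.sub_apply, Finset.sum_sub_distrib, sum_ind]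
        rw [hyr, hy'r, sub_self]
      have hYinv : ∀ v ∈ Y, ∀ m ∈ S,
          (fun ω : Ω => ∑ α : Ω, if m α = ω then v α else 0) ∈ Y := by
        intro v hv m hm
        have : Tact K m v ∈ Y := by
          refine span_Tact_invariant ?_ v hv
          rintro g ⟨y, ⟨hy, hyr⟩, y', ⟨hy', hy'r⟩, rfl⟩
          obtain ⟨hc1, hc2, hc3, hc4⟩ := hkey m hm y hy hyr
          obtain ⟨hd1, hd2, hd3, hd4⟩ := hkey m hm y' hy' hy'r
          rw [map_sub, Tact_ind m _ hc3, Tact_ind m _ hd3, hc4, hd4]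
          exact Submodule.subset_span ⟨m ∘ y, ⟨hc1, hc2⟩, m ∘ y', ⟨hd1, hd2⟩, rfl⟩
        exact this
      -- Y is not the zero subspace
      have haR : x₀ a₀ ∈ Finset.univ.image x₀ :=
        Finset.mem_image_of_mem _ (Finset.mem_univ _)
      obtain ⟨b, hbR⟩ : ∃ b, b ∉ Finset.univ.image x₀ := by
        by_contra h
        push_neg at h
        have hsub : Finset.univ ⊆ Finset.univ.image x₀ := fun z _ => h z
        have hcc := Finset.card_le_card hsub
        rw [Finset.card_univ, hx₀r] at hcc
        omega
      obtain ⟨m₂, hm₂S, hm₂⟩ := htrans (x₀ a₀) b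
      obtain ⟨he1, he2, he3, he4⟩ := hkey m₂ hm₂S x₀ hx₀S hx₀r
      set v₀ : Ω → K :=
        ind K (Finset.univ.image (m₂ ∘ x₀)) - ind K (Finset.univ.image x₀) with hv₀
      have hv₀Y : v₀ ∈ Y :=
        Submodule.subset_span ⟨m₂ ∘ x₀, ⟨he1, he2⟩, x₀, ⟨hx₀S, hx₀r⟩, rfl⟩
      have hbmem : b ∈ Finset.univ.image (m₂ ∘ x₀) :=
        Finset.mem_image.mpr ⟨a₀, Finset.mem_univ _, by simp [Function.comp, hm₂]⟩
      have hv₀ne : v₀ ≠ 0 := by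
        intro h
        have h1 := congrFun h b
        simp only [hv₀, Pi.sub_apply, Pi.zero_apply, ind] at h1
        rw [if_pos hbmem, if_neg hbR] at h1
        simp at h1
      have hYne : Y ≠ ⊥ := by
        intro h
        rw [h, Submodule.mem_bot] at hv₀Y
        exact hv₀ne hv₀Y
      have hYaugEq : Y = augSubmodule Ω K := (hKI Y hYaug hYinv).resolve_left hYne
      -- the transversal functional
      have hcard2 : 1 < (Finset.univ.image x₀).card := by
        rw [hx₀r]; omega
      obtain ⟨ρ₀, hρ₀, ρ₁, hρ₁, hρne⟩ := Finset.one_lt_card.mp hcard2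
      set p : Ω → Prop := fun ω => x₀ ω = ρ₀ with hp
      have htrans1 : ∀ y, y ∈ S → (Finset.univ.image y).card = r →
          ((Finset.univ.image y).filter p).card = 1 := by
        intro y hy hyr
        obtain ⟨hmemc, hrc, hinj, him⟩ := hkey x₀ hx₀S y hy hyr
        have hsub : Finset.univ.image (x₀ ∘ y) ⊆ Finset.univ.image x₀ := by
          intro z hz
          obtain ⟨α, _, rfl⟩ := Finset.mem_image.mp hz
          exact Finset.mem_image.mpr ⟨y α, Finset.mem_univ _, rfl⟩
        have hEq : Finset.univ.image (x₀ ∘ y) = Finset.univ.image x₀ := by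
          refine Finset.eq_of_subset_of_card_le hsub ?_
          rw [hx₀r, hrc]
        have hρin : ρ₀ ∈ (Finset.univ.image y).image x₀ := by
          rw [him, hEq]; exact hρ₀
        obtain ⟨α₀, hα₀R, hα₀⟩ := Finset.mem_image.mp hρin
        rw [Finset.card_eq_one]
        refine ⟨α₀, ?_⟩
        ext β
        simp only [Finset.mem_filter, Finset.mem_singleton]
        constructor
        · rintro ⟨hβR, hβ⟩
          exact hinj (Finset.mem_coe.mpr hβR) (Finset.mem_coe.mpr hα₀R)
            (by rw [show p β from hβ, hα₀])
        · rintro rfl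
          exact ⟨hα₀R, hα₀⟩
      have hker : Y ≤ LinearMap.ker (phiL K p) := by
        rw [hY, Submodule.span_le]
        rintro v ⟨y, ⟨hy, hyr⟩, y', ⟨hy', hy'r⟩, rfl⟩
        simp only [SetLike.mem_coe, LinearMap.mem_ker, map_sub, phiL_ind]
        rw [htrans1 y hy hyr, htrans1 y' hy' hy'r, sub_self]
      obtain ⟨a', _, ha'⟩ := Finset.mem_image.mp hρ₀
      obtain ⟨b', _, hb'⟩ := Finset.mem_image.mp hρ₁
      have hmem : dlt K a' - dlt K b' ∈ Y := by
        rw [hYaugEq]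
        show ∑ ω : Ω, (dlt K a' - dlt K b') ω = 0
        simp only [Pi.sub_apply, Finset.sum_sub_distrib, sum_dlt, sub_self]
      have h1 := hker hmem
      rw [LinearMap.mem_ker, map_sub, phiL_dlt, phiL_dlt] at h1
      rw [if_pos (show p a' from ha'),
        if_neg (show ¬ p b' from fun h => hρne (h.symm.trans hb'))] at h1
      simp at h1
end

section
/- Let (Ω,M) be a finite transformation monoid and μ a probability distribution on M such that the submonoid N generated by the support of μ is transitive on Ω. Let P(α,β) = Σ_{m : αm = β} μ(m) and let π be a stationary distribution for P. Suppose B and S are subsets of Ω such that |S ∩ Bm⁻¹| = 1 for all m ∈ N, where Bm⁻¹ = {α ∈ Ω : αm ∈ B}. Then |S| · π(B) = 1, where π(B) = Σ_{ω∈B} π(ω). -/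
/-!
Put `b = π(B)` and `f = 1_B - b`. By the minimum principle and transitivity of `N`, the only
`P`-harmonic functions are the constants, so `1 - P` maps onto the hyperplane `π ⬝ᵥ f = 0`
and `f = x - P x` for some `x`. Since `(P ^ k 1_B)(α)` averages `1_B(α w)` over `w ∈ N`, the
hypothesis gives `∑_{s ∈ S₀} (P ^ k f)(s) = 1 - |S₀| b` for every `k`. These sums telescope to
`∑_{s ∈ S₀} (x - P ^ k x)(s)`, which is bounded because `P` is stochastic; so `1 - |S₀| b = 0`.
-/

open Finset Matrix

lemma eq_zero_of_abs_le_of_sub_succ_eq {R : Type*} [Field R] [LinearOrder R]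
    [IsStrictOrderedRing R] [Archimedean R] {a : ℕ → R} {δ C : R}
    (hδ : ∀ n, a n - a (n + 1) = δ) (hC : ∀ n, |a n| ≤ C) : δ = 0 := by
  have hlin (n : ℕ) : n * δ = a 0 - a n := by simp [← sum_range_sub', hδ]
  by_contra hδ0
  obtain ⟨n, hn⟩ := exists_nat_gt (2 * C / |δ|)
  have : (n : R) * |δ| ≤ 2 * C := by
    rw [← abs_of_nonneg n.cast_nonneg (α := R), ← abs_mul, hlin]
    linarith [abs_sub (a 0) (a n), hC 0, hC n]
  rw [div_lt_iff₀ (abs_pos.2 hδ0)] at hn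
  linarith

namespace Matrix

variable {R n : Type*} [Fintype n] [DecidableEq n]

/-- Both `range (1 - P)` and `ker (π ⬝ᵥ ·)` have codimension one. -/
lemma exists_sub_mulVec_eq_of_dotProduct_eq_zero [Field R] {P : Matrix n n R} {π : n → R}
    (hπ : π ᵥ* P = π) (hπ0 : π ≠ 0) (hfix : ∀ f, P *ᵥ f = f → ∃ c : R, f = fun _ => c)
    {f : n → R} (hf : π ⬝ᵥ f = 0) : ∃ x, x - P *ᵥ x = f := by
  set T := (1 - P).mulVecLin
  set φ := dotProductEquiv R n π
  have hT (x : n → R) : T x = x - P *ᵥ x := by simp [T]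
  have hker : LinearMap.ker T ≤ R ∙ 1 := fun x hx => by
    obtain ⟨c, rfl⟩ := hfix x (sub_eq_zero.1 ((hT x).symm.trans hx)).symm
    exact Submodule.mem_span_singleton.2 ⟨c, funext fun _ => by simp⟩
  have hrange : LinearMap.range T ≤ LinearMap.ker φ := by
    rintro _ ⟨x, rfl⟩
    simp [φ, hT, dotProduct_sub, dotProduct_mulVec, hπ]
  have hker_le : Module.finrank R (LinearMap.ker T) ≤ 1 :=
    (Submodule.finrank_mono hker).trans ((finrank_span_le_card {(1 : n → R)}).trans (by simp))
  have hT_dim := T.finrank_range_add_finrank_ker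
  have hφ_dim := φ.finrank_ker_add_one_of_ne_zero ((LinearEquiv.map_ne_zero_iff _).2 hπ0)
  obtain ⟨x, hx⟩ : f ∈ LinearMap.range T :=
    (Submodule.eq_of_le_of_finrank_le hrange (by omega)).symm ▸ hf
  exact ⟨x, (hT x).symm.trans hx⟩

section Stochastic

variable [CommRing R] [LinearOrder R] [IsStrictOrderedRing R] {P : Matrix n n R}

lemma abs_mulVec_le_of_mem_rowStochastic (hP : P ∈ rowStochastic R n) {f : n → R} {C : R}
    (hf : ∀ j, |f j| ≤ C) (i : n) : |(P *ᵥ f) i| ≤ C :=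
  calc |(P *ᵥ f) i| ≤ ∑ j, |P i j * f j| := abs_sum_le_sum_abs _ _
    _ ≤ ∑ j, P i j * C := by
        gcongr with j
        rw [abs_mul, abs_of_nonneg (nonneg_of_mem_rowStochastic hP)]
        exact mul_le_mul_of_nonneg_left (hf j) (nonneg_of_mem_rowStochastic hP)
    _ = C := by rw [← sum_mul, sum_row_of_mem_rowStochastic hP, one_mul]

lemma apply_eq_of_mulVec_eq_self_of_isMin (hP : P ∈ rowStochastic R n) {f : n → R}
    (hf : P *ᵥ f = f) {i : n} (hmin : ∀ j, f i ≤ f j) {j : n} (hij : P i j ≠ 0) :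
    f j = f i := by
  have hsum : ∑ k, P i k * (f k - f i) = 0 := by
    simp only [mul_sub, sum_sub_distrib, ← sum_mul, sum_row_of_mem_rowStochastic hP, one_mul]
    exact sub_eq_zero.2 (congrFun hf i)
  have hnonneg : ∀ k ∈ univ, 0 ≤ P i k * (f k - f i) := fun k _ =>
    mul_nonneg (nonneg_of_mem_rowStochastic hP) (sub_nonneg.2 (hmin k))
  have := (sum_eq_zero_iff_of_nonneg hnonneg).1 hsum j (mem_univ j)
  exact sub_eq_zero.1 ((mul_eq_zero.1 this).resolve_left hij)

end Stochastic

/-- The sums telescope in `k`, while `P ^ k x` stays bounded. -/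
lemma eq_zero_of_forall_sum_pow_mulVec_sub_eq [Field R] [LinearOrder R] [IsStrictOrderedRing R]
    [Archimedean R] {P : Matrix n n R} (hP : P ∈ rowStochastic R n) (x : n → R)
    (S : Finset n) {δ : R} (h : ∀ k : ℕ, ∑ s ∈ S, (P ^ k *ᵥ (x - P *ᵥ x)) s = δ) : δ = 0 := by
  refine eq_zero_of_abs_le_of_sub_succ_eq (a := fun k => ∑ s ∈ S, (P ^ k *ᵥ x) s)
    (C := #S * ∑ j, |x j|) (fun k => ?_) (fun k => ?_)
  · simp [← h k, ← sum_sub_distrib, mulVec_sub, pow_succ, mulVec_mulVec]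
  · refine (abs_sum_le_sum_abs _ _).trans ?_
    rw [← nsmul_eq_mul, ← sum_const]
    refine sum_le_sum fun s _ => abs_mulVec_le_of_mem_rowStochastic (pow_mem hP k) (fun j => ?_) s
    exact single_le_sum (fun j _ => abs_nonneg (x j)) (mem_univ j)

end Matrix

section TransitionMatrix

variable {Ω R : Type*} [Fintype Ω] [DecidableEq Ω]

def transitionMatrix [Semiring R] (μ : (Ω → Ω) → R) : Matrix Ω Ω R :=
  fun α β => ∑ m, if m α = β then μ m else 0

section CommSemiring

variable [CommSemiring R] {μ : (Ω → Ω) → R}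

lemma transitionMatrix_mulVec_apply (f : Ω → R) (α : Ω) :
    (transitionMatrix μ *ᵥ f) α = ∑ m, μ m * f (m α) := by
  simp only [Matrix.mulVec, dotProduct, transitionMatrix, sum_mul, ite_mul, zero_mul]
  rw [sum_comm]
  simp

lemma sum_transitionMatrix_pow_mulVec_apply_comp (hμ1 : ∑ m, μ m = 1) (S₀ : Finset Ω)
    {f : Ω → R} {c : R}
    (hf : ∀ w ∈ Submonoid.closure {m : Function.End Ω | μ m ≠ 0}, ∑ s ∈ S₀, f (w s) = c)
    (k : ℕ) : ∀ w ∈ Submonoid.closure {m : Function.End Ω | μ m ≠ 0},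
      ∑ s ∈ S₀, (transitionMatrix μ ^ k *ᵥ f) (w s) = c := by
  induction k with
  | zero => simpa using hf
  | succ k ih =>
    intro w hw
    have hterm (m : Ω → Ω) :
        ∑ s ∈ S₀, μ m * (transitionMatrix μ ^ k *ᵥ f) (m (w s)) = μ m * c := by
      by_cases hm : μ m = 0
      · simp [hm]
      · rw [← mul_sum]
        exact congrArg _ (ih _ (mul_mem (Submonoid.subset_closure hm) hw))
    simp only [pow_succ', ← mulVec_mulVec, transitionMatrix_mulVec_apply]
    rw [sum_comm, sum_congr rfl fun m _ => hterm m, ← sum_mul, hμ1, one_mul]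

end CommSemiring

variable [CommRing R] [LinearOrder R] [IsStrictOrderedRing R] {μ : (Ω → Ω) → R}

lemma transitionMatrix_mem_rowStochastic (hμ0 : ∀ m, 0 ≤ μ m) (hμ1 : ∑ m, μ m = 1) :
    transitionMatrix μ ∈ rowStochastic R Ω := by
  refine mem_rowStochastic_iff_sum.2 ⟨fun α β => sum_nonneg fun m _ => ?_, fun α => ?_⟩
  · split_ifs <;> simp [hμ0]
  · simpa [transitionMatrix, sum_comm (γ := Ω)] using hμ1

lemma transitionMatrix_apply_ne_zero (hμ0 : ∀ m, 0 ≤ μ m) {m : Ω → Ω} (hm : μ m ≠ 0)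
    (α : Ω) : transitionMatrix μ α (m α) ≠ 0 := by
  refine (lt_of_lt_of_le ((hμ0 m).lt_of_ne' hm) ?_).ne'
  simpa [transitionMatrix] using single_le_sum (f := fun m' => if m' α = m α then μ m' else 0)
    (fun m' _ => by split_ifs <;> simp [hμ0]) (mem_univ m)

lemma eq_of_transitionMatrix_mulVec_eq_self (hμ0 : ∀ m, 0 ≤ μ m) (hμ1 : ∑ m, μ m = 1)
    (htrans : ∀ α β : Ω, ∃ m ∈ Submonoid.closure {m : Function.End Ω | μ m ≠ 0}, m α = β)
    {f : Ω → R} (hf : transitionMatrix μ *ᵥ f = f) (α β : Ω) : f α = f β := by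
  have hP := transitionMatrix_mem_rowStochastic hμ0 hμ1
  obtain ⟨α₀, -, hα₀⟩ := exists_min_image univ f ⟨α, mem_univ α⟩
  have hmin (γ : Ω) (hγ : f γ = f α₀) (j : Ω) : f γ ≤ f j := hγ ▸ hα₀ j (mem_univ j)
  have hinv : ∀ w ∈ Submonoid.closure {m : Function.End Ω | μ m ≠ 0},
      ∀ γ, f γ = f α₀ → f (w γ) = f α₀ := by
    intro w hw
    induction hw using Submonoid.closure_induction with
    | mem m hm =>
      exact fun γ hγ => (apply_eq_of_mulVec_eq_self_of_isMin hP hf (hmin γ hγ)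
        (transitionMatrix_apply_ne_zero hμ0 hm γ)).trans hγ
    | one => exact fun γ hγ => hγ
    | mul x y _ _ hx hy => exact fun γ hγ => hx _ (hy γ hγ)
  obtain ⟨w, hw, rfl⟩ := htrans α₀ α
  obtain ⟨w', hw', rfl⟩ := htrans α₀ β
  rw [hinv w hw α₀ rfl, hinv w' hw' α₀ rfl]

end TransitionMatrix

/-- In the setting of the ergodic theorem: `(Ω, M)` a finite
transformation monoid, `μ` a probability distribution on `M` whose support generates a
submonoid `N` transitive on `Ω`, and `π` a stationary distribution for
`P(α, β) = ∑_{m : αm = β} μ m`.  If `B, S₀ ⊆ Ω` satisfy `|S₀ ∩ Bm⁻¹| = 1` for all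
`m ∈ N`, then `|S₀| ⋅ π(B) = 1`. -/
theorem generalized_neumann_lemma {Ω : Type*} [Fintype Ω] [DecidableEq Ω]
    (μ : (Ω → Ω) → ℝ) (hμ0 : ∀ m : Ω → Ω, 0 ≤ μ m) (hμ1 : ∑ m : Ω → Ω, μ m = 1)
    (htrans : ∀ α β : Ω,
      ∃ m ∈ Submonoid.closure {m : Function.End Ω | μ m ≠ 0}, m α = β)
    (π : Ω → ℝ) (hπ1 : ∑ ω : Ω, π ω = 1)
    (hstat : ∀ β : Ω,
      ∑ α : Ω, π α * (∑ m : Ω → Ω, if m α = β then μ m else 0) = π β)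
    (B S₀ : Finset Ω)
    (hBS : ∀ m ∈ Submonoid.closure {m : Function.End Ω | μ m ≠ 0},
      (@Finset.filter Ω (fun α : Ω => m α ∈ B) (fun _ => by infer_instance) S₀).card = 1) :
    (S₀.card : ℝ) * ∑ ω ∈ B, π ω = 1 := by
  set b := ∑ ω ∈ B, π ω
  set f : Ω → ℝ := fun ω => (if ω ∈ B then 1 else 0) - b
  have hπ0 : π ≠ 0 := by rintro rfl; simp at hπ1
  obtain ⟨ω₀, -⟩ := Function.ne_iff.1 hπ0
  have hfix (g : Ω → ℝ) (hg : transitionMatrix μ *ᵥ g = g) : ∃ c, g = fun _ => c :=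
    ⟨g ω₀, funext fun α => eq_of_transitionMatrix_mulVec_eq_self hμ0 hμ1 htrans hg α ω₀⟩
  have hπf : π ⬝ᵥ f = 0 := by simp [f, b, dotProduct, mul_sub, sum_sub_distrib, ← sum_mul, hπ1]
  obtain ⟨x, hx⟩ := exists_sub_mulVec_eq_of_dotProduct_eq_zero (funext hstat) hπ0 hfix hπf
  have hcount (k : ℕ) : ∑ s ∈ S₀, (transitionMatrix μ ^ k *ᵥ f) s = 1 - #S₀ * b := by
    refine sum_transitionMatrix_pow_mulVec_apply_comp hμ1 S₀ (fun w hw => ?_) k 1 (one_mem _)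
    simp [f, sum_sub_distrib, sum_boole, hBS w hw]
  have := eq_zero_of_forall_sum_pow_mulVec_sub_eq (transitionMatrix_mem_rowStochastic hμ0 hμ1)
    x S₀ (hx ▸ hcount)
  linarith
end

section
/- Let (Ω,M) be a finite transformation monoid and μ a probability distribution on M such that the submonoid generated by the support of μ is transitive on Ω. Let P(α,β) = Σ_{m : αm = β} μ(m) and let π be a stationary distribution for P. Let s belong to the minimal ideal I(M) and let B be any block of ker s, i.e., B = ωs⁻¹ = {α : αs = ω} for some ω ∈ Ωs. Then |Ωs| · π(B) = 1; in particular the partition ker s is π-uniform (all its blocks have the same π-measure). -/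
open Finset

set_option linter.unusedSectionVars false

namespace KPU

variable {Ω : Type*} [Fintype Ω] [DecidableEq Ω]


variable {Ω : Type*} [Fintype Ω] [DecidableEq Ω]

noncomputable def coefs (μ : (Ω → Ω) → ℝ) : ℕ → (Ω → Ω) → ℝ
  | 0 => fun w => if w = id then 1 else 0
  | (k+1) => fun w => ∑ w' : Ω → Ω, ∑ m : Ω → Ω,
      if w = m ∘ w' then μ m * coefs μ k w' else 0

lemma coefs_nonneg (μ : (Ω → Ω) → ℝ) (hμ0 : ∀ m : Ω → Ω, 0 ≤ μ m) :
    ∀ k w, 0 ≤ coefs μ k w := by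
  intro k
  induction k with
  | zero => intro w; simp only [coefs]; split <;> norm_num
  | succ k ih =>
    intro w
    simp only [coefs]
    refine Finset.sum_nonneg fun w' _ => Finset.sum_nonneg fun m _ => ?_
    split
    · exact mul_nonneg (hμ0 m) (ih w')
    · exact le_refl 0

lemma coefs_collapse (μ : (Ω → Ω) → ℝ) (k : ℕ) (w' : Ω → Ω) :
    (∑ w : Ω → Ω, ∑ m : Ω → Ω, if w = m ∘ w' then μ m * coefs μ k w' else 0)
      = (∑ m : Ω → Ω, μ m) * coefs μ k w' := by
  rw [Finset.sum_comm, Finset.sum_mul]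
  refine Finset.sum_congr rfl fun m _ => ?_
  rw [Finset.sum_ite_eq' Finset.univ (m ∘ w') (fun _ => μ m * coefs μ k w')]
  simp

lemma coefs_sum (μ : (Ω → Ω) → ℝ) (hμ1 : ∑ m : Ω → Ω, μ m = 1) :
    ∀ k, ∑ w : Ω → Ω, coefs μ k w = 1 := by
  intro k
  induction k with
  | zero => simp [coefs]
  | succ k ih =>
    simp only [coefs]
    rw [Finset.sum_comm]
    calc (∑ w' : Ω → Ω, ∑ w : Ω → Ω, ∑ m : Ω → Ω,
            if w = m ∘ w' then μ m * coefs μ k w' else 0)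
        = ∑ w' : Ω → Ω, (∑ m : Ω → Ω, μ m) * coefs μ k w' :=
          Finset.sum_congr rfl fun w' _ => coefs_collapse μ k w'
      _ = 1 := by rw [hμ1]; simpa using ih

lemma coefs_memS (μ : (Ω → Ω) → ℝ) (S : Set (Ω → Ω)) (hid : id ∈ S)
    (hcomp : ∀ m ∈ S, ∀ n ∈ S, n ∘ m ∈ S)
    (hsupp : ∀ m : Ω → Ω, μ m ≠ 0 → m ∈ S) :
    ∀ k w, coefs μ k w ≠ 0 → w ∈ S := by
  intro k
  induction k with
  | zero =>
    intro w hw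
    simp only [coefs] at hw
    by_cases h : w = id
    · rw [h]; exact hid
    · simp [h] at hw
  | succ k ih =>
    intro w hw
    simp only [coefs] at hw
    obtain ⟨w', -, hw'⟩ := Finset.exists_ne_zero_of_sum_ne_zero hw
    obtain ⟨m, -, hm⟩ := Finset.exists_ne_zero_of_sum_ne_zero hw'
    by_cases h : w = m ∘ w'
    · rw [if_pos h] at hm
      have hμm : μ m ≠ 0 := fun hc => hm (by rw [hc, zero_mul])
      have hck : coefs μ k w' ≠ 0 := fun hc => hm (by rw [hc, mul_zero])
      rw [h]
      exact hcomp w' (ih w' hck) m (hsupp m hμm)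
    · rw [if_neg h] at hm; exact absurd rfl hm

/-- the recurrence for weighted sums -/
lemma coefs_rec (μ : (Ω → Ω) → ℝ) (k : ℕ) (G : (Ω → Ω) → ℝ) :
    (∑ w : Ω → Ω, coefs μ (k+1) w * G w)
      = ∑ w' : Ω → Ω, coefs μ k w' * ∑ m : Ω → Ω, μ m * G (m ∘ w') := by
  conv_lhs => simp only [coefs]
  calc (∑ w : Ω → Ω, (∑ w' : Ω → Ω, ∑ m : Ω → Ω,
          if w = m ∘ w' then μ m * coefs μ k w' else 0) * G w)
      = ∑ w : Ω → Ω, ∑ w' : Ω → Ω, ∑ m : Ω → Ω,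
          if w = m ∘ w' then μ m * coefs μ k w' * G w else 0 := by
        refine Finset.sum_congr rfl fun w _ => ?_
        rw [Finset.sum_mul]
        refine Finset.sum_congr rfl fun w' _ => ?_
        rw [Finset.sum_mul]
        refine Finset.sum_congr rfl fun m _ => ?_
        split <;> simp
    _ = ∑ w' : Ω → Ω, ∑ w : Ω → Ω, ∑ m : Ω → Ω,
          if w = m ∘ w' then μ m * coefs μ k w' * G w else 0 := Finset.sum_comm
    _ = ∑ w' : Ω → Ω, ∑ m : Ω → Ω, ∑ w : Ω → Ω,
          if w = m ∘ w' then μ m * coefs μ k w' * G w else 0 :=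
          Finset.sum_congr rfl fun w' _ => Finset.sum_comm
    _ = ∑ w' : Ω → Ω, ∑ m : Ω → Ω, μ m * coefs μ k w' * G (m ∘ w') := by
        refine Finset.sum_congr rfl fun w' _ => Finset.sum_congr rfl fun m _ => ?_
        have : ∀ w : Ω → Ω, (if w = m ∘ w' then μ m * coefs μ k w' * G w else 0)
            = if w = m ∘ w' then μ m * coefs μ k w' * G (m ∘ w') else 0 := by
          intro w
          by_cases h : w = m ∘ w' <;> simp [h]
        rw [Finset.sum_congr rfl fun w _ => this w,
          Finset.sum_ite_eq' Finset.univ (m ∘ w')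
            (fun _ => μ m * coefs μ k w' * G (m ∘ w'))]
        simp
    _ = ∑ w' : Ω → Ω, coefs μ k w' * ∑ m : Ω → Ω, μ m * G (m ∘ w') := by
        refine Finset.sum_congr rfl fun w' _ => ?_
        rw [Finset.mul_sum]
        exact Finset.sum_congr rfl fun m _ => by ring





noncomputable def Pop (μ : (Ω → Ω) → ℝ) : (Ω → ℝ) →ₗ[ℝ] (Ω → ℝ) where
  toFun h := fun α => ∑ m : Ω → Ω, μ m * h (m α)
  map_add' x y := by
    funext α
    simp only [Pi.add_apply, mul_add, Finset.sum_add_distrib]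
  map_smul' c x := by
    funext α
    simp only [RingHom.id_apply, Pi.smul_apply, smul_eq_mul, Finset.mul_sum]
    exact Finset.sum_congr rfl fun m _ => by ring

lemma Pop_apply (μ : (Ω → Ω) → ℝ) (h : Ω → ℝ) (α : Ω) :
    Pop μ h α = ∑ m : Ω → Ω, μ m * h (m α) := rfl

noncomputable def piF (π : Ω → ℝ) : (Ω → ℝ) →ₗ[ℝ] ℝ where
  toFun h := ∑ γ : Ω, π γ * h γ
  map_add' x y := by
    simp only [Pi.add_apply, mul_add, Finset.sum_add_distrib]
  map_smul' c x := by
    simp only [RingHom.id_apply, Pi.smul_apply, smul_eq_mul, Finset.mul_sum]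
    exact Finset.sum_congr rfl fun m _ => by ring

lemma piF_apply (π : Ω → ℝ) (h : Ω → ℝ) : piF π h = ∑ γ : Ω, π γ * h γ := rfl

lemma exists_potential (μ : (Ω → Ω) → ℝ) (hμ0 : ∀ m : Ω → Ω, 0 ≤ μ m)
    (hμ1 : ∑ m : Ω → Ω, μ m = 1)
    (htrans : ∀ α β : Ω,
      ∃ m ∈ Submonoid.closure {m : Function.End Ω | μ m ≠ 0}, m α = β)
    (π : Ω → ℝ) (hπ1 : ∑ ω : Ω, π ω = 1)
    (hstat : ∀ β : Ω,
      ∑ α : Ω, π α * (∑ m : Ω → Ω, if m α = β then μ m else 0) = π β)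
    (f : Ω → ℝ) :
    ∃ h : Ω → ℝ, ∀ β : Ω,
      f β = (∑ γ : Ω, π γ * f γ) + h β - ∑ m : Ω → Ω, μ m * h (m β) := by
  have hΩ : Nonempty Ω := by
    by_contra hne
    rw [not_nonempty_iff] at hne
    rw [Finset.univ_eq_empty, Finset.sum_empty] at hπ1
    norm_num at hπ1
  set L : (Ω → ℝ) →ₗ[ℝ] (Ω → ℝ) := LinearMap.id - Pop μ with hL
  -- harmonic functions are constant
  have hharm : ∀ h : Ω → ℝ, Pop μ h = h → ∀ α β : Ω, h α = h β := by
    intro h hh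
    obtain ⟨α₀, -, hmax⟩ := Finset.exists_max_image Finset.univ h
      ⟨Classical.arbitrary Ω, Finset.mem_univ _⟩
    have hprop : ∀ m : Ω → Ω, μ m ≠ 0 → ∀ α, h α = h α₀ → h (m α) = h α₀ := by
      intro m hm α hα
      have hPa : ∑ m' : Ω → Ω, μ m' * h (m' α) = h α := by
        rw [← Pop_apply μ h α, hh]
      have h1 : ∑ m' : Ω → Ω, μ m' * (h α₀ - h (m' α)) = 0 := by
        have : ∑ m' : Ω → Ω, μ m' * (h α₀ - h (m' α))
            = (∑ m' : Ω → Ω, μ m') * h α₀ - ∑ m' : Ω → Ω, μ m' * h (m' α) := by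
          rw [Finset.sum_mul, ← Finset.sum_sub_distrib]
          exact Finset.sum_congr rfl fun m' _ => by ring
        rw [this, hμ1, hPa, one_mul, hα, sub_self]
      have h2 : ∀ m' ∈ Finset.univ, (0:ℝ) ≤ μ m' * (h α₀ - h (m' α)) :=
        fun m' _ => mul_nonneg (hμ0 m') (sub_nonneg.mpr (hmax _ (Finset.mem_univ _)))
      have h3 := (Finset.sum_eq_zero_iff_of_nonneg h2).mp h1 m (Finset.mem_univ m)
      rcases mul_eq_zero.mp h3 with hc | hc
      · exact absurd hc hm
      · linarith [sub_eq_zero.mp hc]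
    have hall : ∀ β : Ω, h β = h α₀ := by
      intro β
      obtain ⟨mm, hmm, hmme⟩ := htrans α₀ β
      have hQ : ∀ (x : Function.End Ω),
          x ∈ Submonoid.closure {m : Function.End Ω | μ m ≠ 0} →
          ∀ γ : Ω, h γ = h α₀ → h (x γ) = h α₀ := by
        intro x hx
        induction hx using Submonoid.closure_induction with
        | mem y hy => exact fun γ hγ => hprop y hy γ hγ
        | one => exact fun γ hγ => hγ
        | mul x y hx hy ihx ihy => exact fun γ hγ => ihx (y γ) (ihy γ hγ)
      rw [← hmme]
      exact hQ mm hmm α₀ rfl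
    intro α β
    rw [hall α, hall β]
  -- kernel of L is the constants
  have hker : LinearMap.ker L = Submodule.span ℝ {(fun _ => (1:ℝ) : Ω → ℝ)} := by
    apply le_antisymm
    · intro h hh
      rw [LinearMap.mem_ker, hL, LinearMap.sub_apply, LinearMap.id_apply,
        sub_eq_zero] at hh
      have hc := hharm h hh.symm
      have : h = (h (Classical.arbitrary Ω)) • (fun _ => (1:ℝ) : Ω → ℝ) := by
        funext β
        simp [hc β (Classical.arbitrary Ω)]
      rw [this]
      exact Submodule.smul_mem _ _ (Submodule.mem_span_singleton_self _)
    · rw [Submodule.span_le, Set.singleton_subset_iff]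
      rw [SetLike.mem_coe, LinearMap.mem_ker, hL, LinearMap.sub_apply,
        LinearMap.id_apply, sub_eq_zero]
      funext α
      rw [Pop_apply]
      simp [hμ1]
  -- π annihilates the range of L
  have hstat' : ∀ h : Ω → ℝ, piF π (Pop μ h) = piF π h := by
    intro h
    have expand : ∀ γ : Ω, π γ * h γ
        = ∑ α : Ω, ∑ m : Ω → Ω, (if m α = γ then π α * μ m * h γ else 0) := by
      intro γ
      rw [← hstat γ, Finset.sum_mul]
      refine Finset.sum_congr rfl fun α _ => ?_
      rw [Finset.mul_sum, Finset.sum_mul]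
      refine Finset.sum_congr rfl fun m _ => ?_
      by_cases hc : m α = γ <;> simp [hc] <;> ring
    calc piF π (Pop μ h) = ∑ γ : Ω, ∑ m : Ω → Ω, π γ * μ m * h (m γ) := by
          rw [piF_apply]
          refine Finset.sum_congr rfl fun γ _ => ?_
          rw [Pop_apply, Finset.mul_sum]
          exact Finset.sum_congr rfl fun m _ => by ring
      _ = piF π h := by
          rw [piF_apply]
          have hexp : ∑ γ : Ω, π γ * h γ
              = ∑ γ : Ω, ∑ α : Ω, ∑ m : Ω → Ω,
                  (if m α = γ then π α * μ m * h γ else 0) :=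
            Finset.sum_congr rfl fun γ _ => expand γ
          have hswap : (∑ γ : Ω, ∑ α : Ω, ∑ m : Ω → Ω,
                (if m α = γ then π α * μ m * h γ else 0))
              = ∑ α : Ω, ∑ m : Ω → Ω, π α * μ m * h (m α) := by
            rw [Finset.sum_comm]
            refine Finset.sum_congr rfl fun α _ => ?_
            rw [Finset.sum_comm]
            refine Finset.sum_congr rfl fun m _ => ?_
            rw [Finset.sum_ite_eq Finset.univ (m α) (fun x => π α * μ m * h x)]
            simp
          rw [hexp, hswap]
  have hrange_le : LinearMap.range L ≤ LinearMap.ker (piF π) := by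
    rintro g ⟨h, rfl⟩
    rw [LinearMap.mem_ker, hL, LinearMap.sub_apply, LinearMap.id_apply, map_sub,
      hstat' h, sub_self]
  -- finrank bookkeeping
  have h1 : Module.finrank ℝ (LinearMap.ker L) = 1 := by
    rw [hker]
    refine finrank_span_singleton ?_
    intro hcontra
    have := congrFun hcontra (Classical.arbitrary Ω)
    norm_num at this
  have h2 := LinearMap.finrank_range_add_finrank_ker L
  rw [h1] at h2
  have hsurj : LinearMap.range (piF π) = ⊤ := by
    rw [LinearMap.range_eq_top]
    intro x
    refine ⟨fun _ => x, ?_⟩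
    show (∑ γ : Ω, π γ * x) = x
    rw [← Finset.sum_mul, hπ1, one_mul]
  have h3 := LinearMap.finrank_range_add_finrank_ker (piF π)
  rw [hsurj, finrank_top, Module.finrank_self] at h3
  have hrange_eq : LinearMap.range L = LinearMap.ker (piF π) :=
    Submodule.eq_of_le_of_finrank_le hrange_le (by omega)
  -- conclude
  set c₀ : ℝ := ∑ γ : Ω, π γ * f γ with hc₀
  have hg : (f - c₀ • (fun _ => (1:ℝ) : Ω → ℝ)) ∈ LinearMap.ker (piF π) := by
    rw [LinearMap.mem_ker, map_sub, map_smul]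
    have hπ1' : piF π (fun _ => (1:ℝ) : Ω → ℝ) = 1 := by
      rw [piF_apply]; simp [hπ1]
    rw [hπ1']
    have : piF π f = c₀ := rfl
    rw [this]
    simp
  rw [← hrange_eq] at hg
  obtain ⟨h, hh⟩ := hg
  refine ⟨h, fun β => ?_⟩
  have := congrFun hh β
  rw [hL] at this
  simp only [LinearMap.sub_apply, LinearMap.id_apply, Pi.sub_apply,
    Pi.smul_apply, smul_eq_mul, mul_one] at this
  have hPop : Pop μ h β = ∑ m : Ω → Ω, μ m * h (m β) := rfl
  rw [hPop] at this
  linarith [this]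


end KPU

/-- In the setting of the ergodic theorem: `(Ω, M)` a finite
transformation monoid, `μ` a probability distribution on `M` whose support generates a
transitive submonoid, and `π` a stationary distribution for
`P(α, β) = ∑_{m : αm = β} μ m`.  If `s` lies in the minimal ideal `I(M)` then every
block `B = ωs⁻¹` (`ω ∈ Ωs`) of `ker s` satisfies `|Ωs| ⋅ π(B) = 1`; in particular
`ker s` is `π`-uniform. -/
theorem kernel_pi_uniform {Ω : Type*} [Fintype Ω] [DecidableEq Ω]
    (S : Set (Ω → Ω)) (hid : id ∈ S) (hcomp : ∀ m ∈ S, ∀ n ∈ S, n ∘ m ∈ S)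
    (μ : (Ω → Ω) → ℝ) (hμ0 : ∀ m : Ω → Ω, 0 ≤ μ m) (hμ1 : ∑ m : Ω → Ω, μ m = 1)
    (hsupp : ∀ m : Ω → Ω, μ m ≠ 0 → m ∈ S)
    (htrans : ∀ α β : Ω,
      ∃ m ∈ Submonoid.closure {m : Function.End Ω | μ m ≠ 0}, m α = β)
    (π : Ω → ℝ) (hπ0 : ∀ ω : Ω, 0 ≤ π ω) (hπ1 : ∑ ω : Ω, π ω = 1)
    (hstat : ∀ β : Ω,
      ∑ α : Ω, π α * (∑ m : Ω → Ω, if m α = β then μ m else 0) = π β)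
    (s : Ω → Ω) (hs : s ∈ S)
    (hsI : ∀ n ∈ S, ∃ u ∈ S, ∃ v ∈ S, s = v ∘ n ∘ u) :
    (∀ ω ∈ Set.range s,
      ((Set.range s).ncard : ℝ) *
        ∑ α ∈ Finset.univ.filter (fun α : Ω => s α = ω), π α = 1) ∧
    (∀ ω ∈ Set.range s, ∀ ω' ∈ Set.range s,
      ∑ α ∈ Finset.univ.filter (fun α : Ω => s α = ω), π α =
        ∑ α ∈ Finset.univ.filter (fun α : Ω => s α = ω'), π α) := by
  classical
  set T : Finset Ω := Finset.univ.image s with hT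
  have hrangeT : Set.range s = (T : Set Ω) := by
    rw [hT, Finset.coe_image, Finset.coe_univ, Set.image_univ]
  have hmemT : ∀ ω, ω ∈ Set.range s ↔ ω ∈ T := by
    intro ω
    rw [hrangeT, Finset.mem_coe]
  -- rank minimality of s
  have hrank : ∀ n ∈ S, T.card ≤ (Finset.univ.image n).card := by
    intro n hn
    obtain ⟨u, hu, v, hv, hsvnu⟩ := hsI n hn
    have h1 : T = ((Finset.univ.image u).image n).image v := by
      rw [hT, hsvnu, Finset.image_image, Finset.image_image]
      rfl
    rw [h1]
    calc (((Finset.univ.image u).image n).image v).card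
        ≤ ((Finset.univ.image u).image n).card := Finset.card_image_le
      _ ≤ (Finset.univ.image n).card :=
          Finset.card_le_card (Finset.image_subset_image (Finset.subset_univ _))
  -- key transversal counting
  have hkey : ∀ w ∈ S, ∀ ω ∈ T,
      (∑ x ∈ T, if s (w x) = ω then (1:ℝ) else 0) = 1 := by
    intro w hw ω hω
    have hmemS : (fun α => s (w (s α))) ∈ S := hcomp _ (hcomp s hs w hw) s hs
    have himg : T.image (fun x => s (w x))
        = Finset.univ.image (fun α => s (w (s α))) := by
      rw [hT, Finset.image_image]
      rfl
    have hcard : (T.image (fun x => s (w x))).card = T.card := by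
      refine le_antisymm Finset.card_image_le ?_
      rw [himg]
      exact hrank _ hmemS
    have hinj : Set.InjOn (fun x => s (w x)) ↑T := Finset.card_image_iff.mp hcard
    obtain ⟨a, ha, hae⟩ := Finset.surj_on_of_inj_on_of_card_le
      (s := T) (t := T) (fun x _ => s (w x))
      (fun x _ => Finset.mem_image_of_mem s (Finset.mem_univ _))
      (fun x y hx hy hxy => hinj (Finset.mem_coe.mpr hx) (Finset.mem_coe.mpr hy) hxy)
      le_rfl ω hω
    have hfilter : T.filter (fun x => s (w x) = ω) = {a} := by
      ext x
      simp only [Finset.mem_filter, Finset.mem_singleton]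
      constructor
      · rintro ⟨hxT, hxe⟩
        exact hinj (Finset.mem_coe.mpr hxT) (Finset.mem_coe.mpr ha)
          (by show s (w x) = s (w a); rw [hxe, hae])
      · rintro rfl
        exact ⟨ha, hae.symm⟩
    rw [Finset.sum_boole, hfilter]
    simp
  -- the main pointwise claim
  have main : ∀ ω ∈ T,
      ((T.card : ℝ) * ∑ α ∈ Finset.univ.filter (fun α : Ω => s α = ω), π α) = 1 := by
    intro ω hω
    set f : Ω → ℝ := fun β => if s β = ω then 1 else 0 with hf
    obtain ⟨h, hh⟩ := KPU.exists_potential μ hμ0 hμ1 htrans π hπ1 hstat f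
    set c₀ : ℝ := ∑ γ : Ω, π γ * f γ with hc₀
    have hc₀' : c₀ = ∑ α ∈ Finset.univ.filter (fun α : Ω => s α = ω), π α := by
      rw [hc₀, Finset.sum_filter]
      refine Finset.sum_congr rfl fun γ _ => ?_
      by_cases hc : s γ = ω <;> simp [hf, hc]
    -- the sequence a k
    set a : ℕ → ℝ := fun k => ∑ w : Ω → Ω, KPU.coefs μ k w * ∑ x ∈ T, h (w x) with ha
    have hstep : ∀ k : ℕ, (1:ℝ) - (T.card : ℝ) * c₀ = a k - a (k+1) := by
      intro k
      have hone : ∑ w : Ω → Ω, KPU.coefs μ k w * (∑ x ∈ T, f (w x)) = 1 := by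
        have hterm : ∀ w : Ω → Ω,
            KPU.coefs μ k w * (∑ x ∈ T, f (w x)) = KPU.coefs μ k w := by
          intro w
          by_cases hcw : KPU.coefs μ k w = 0
          · rw [hcw, zero_mul]
          · have hwS : w ∈ S := KPU.coefs_memS μ S hid hcomp hsupp k w hcw
            have : (∑ x ∈ T, f (w x)) = 1 := hkey w hwS ω hω
            rw [this, mul_one]
        rw [Finset.sum_congr rfl fun w _ => hterm w, KPU.coefs_sum μ hμ1 k]
      have hrec := KPU.coefs_rec μ k (fun w => ∑ x ∈ T, h (w x))
      simp only [Function.comp_apply] at hrec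
      -- expand f inside hone
      have hexpand : ∀ w : Ω → Ω, (∑ x ∈ T, f (w x))
          = (T.card : ℝ) * c₀ + (∑ x ∈ T, h (w x))
            - ∑ m : Ω → Ω, μ m * ∑ x ∈ T, h (m (w x)) := by
        intro w
        rw [Finset.sum_congr rfl fun x (_ : x ∈ T) => hh (w x)]
        rw [Finset.sum_sub_distrib, Finset.sum_add_distrib]
        congr 1
        · congr 1
          rw [Finset.sum_const, nsmul_eq_mul]
        · rw [Finset.sum_comm]
          exact Finset.sum_congr rfl fun m _ => (Finset.mul_sum _ _ _).symm
      have hsplit : ∑ w : Ω → Ω, KPU.coefs μ k w * (∑ x ∈ T, f (w x))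
          = (T.card : ℝ) * c₀ * (∑ w : Ω → Ω, KPU.coefs μ k w)
            + a k - a (k+1) := by
        rw [Finset.sum_congr rfl fun w _ => by rw [hexpand w]]
        have hdistrib : ∀ w : Ω → Ω, KPU.coefs μ k w *
              ((T.card : ℝ) * c₀ + (∑ x ∈ T, h (w x))
                - ∑ m : Ω → Ω, μ m * ∑ x ∈ T, h (m (w x)))
            = (T.card : ℝ) * c₀ * KPU.coefs μ k w
              + KPU.coefs μ k w * (∑ x ∈ T, h (w x))
              - KPU.coefs μ k w * ∑ m : Ω → Ω, μ m * ∑ x ∈ T, h (m (w x)) := by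
          intro w; ring
        rw [Finset.sum_congr rfl fun w _ => hdistrib w]
        rw [Finset.sum_sub_distrib, Finset.sum_add_distrib]
        congr 1
        · congr 1
          · rw [← Finset.mul_sum]
        · rw [ha]
          simp only []
          rw [hrec]
      rw [hone] at hsplit
      rw [KPU.coefs_sum μ hμ1 k, mul_one] at hsplit
      linarith [hsplit]
    -- a K = a 0 - K * d
    set d : ℝ := (1:ℝ) - (T.card : ℝ) * c₀ with hd
    have haK : ∀ K : ℕ, a K = a 0 - (K : ℝ) * d := by
      intro K
      induction K with
      | zero => simp
      | succ K ih =>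
        have := hstep K
        push_cast
        linarith [this, ih]
    -- boundedness
    set M : ℝ := ∑ β : Ω, |h β| with hM
    have hM0 : 0 ≤ M := Finset.sum_nonneg fun β _ => abs_nonneg _
    have hbound : ∀ k : ℕ, |a k| ≤ (T.card : ℝ) * M := by
      intro k
      calc |a k| ≤ ∑ w : Ω → Ω, |KPU.coefs μ k w * ∑ x ∈ T, h (w x)| :=
            Finset.abs_sum_le_sum_abs _ _
        _ ≤ ∑ w : Ω → Ω, KPU.coefs μ k w * ((T.card : ℝ) * M) := by
            refine Finset.sum_le_sum fun w _ => ?_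
            rw [abs_mul, abs_of_nonneg (KPU.coefs_nonneg μ hμ0 k w)]
            refine mul_le_mul_of_nonneg_left ?_ (KPU.coefs_nonneg μ hμ0 k w)
            calc |∑ x ∈ T, h (w x)| ≤ ∑ x ∈ T, |h (w x)| :=
                  Finset.abs_sum_le_sum_abs _ _
              _ ≤ ∑ _x ∈ T, M := by
                  refine Finset.sum_le_sum fun x _ => ?_
                  rw [hM]
                  exact Finset.single_le_sum (fun β _ => abs_nonneg (h β))
                    (Finset.mem_univ (w x))
              _ = (T.card : ℝ) * M := by rw [Finset.sum_const, nsmul_eq_mul]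
        _ = (T.card : ℝ) * M := by
            rw [← Finset.sum_mul, KPU.coefs_sum μ hμ1 k, one_mul]
    -- conclude d = 0
    have hd0 : d = 0 := by
      by_contra hne
      obtain ⟨K, hK⟩ := exists_nat_gt ((2 * ((T.card : ℝ) * M)) / |d|)
      have habs : |(K : ℝ) * d| ≤ 2 * ((T.card : ℝ) * M) := by
        have := haK K
        have h1 : (K : ℝ) * d = a 0 - a K := by linarith [this]
        rw [h1]
        calc |a 0 - a K| ≤ |a 0| + |a K| := abs_sub _ _
          _ ≤ (T.card : ℝ) * M + (T.card : ℝ) * M := add_le_add (hbound 0) (hbound K)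
          _ = 2 * ((T.card : ℝ) * M) := by ring
      have hdpos : 0 < |d| := abs_pos.mpr hne
      rw [abs_mul, Nat.abs_cast] at habs
      have : (K : ℝ) ≤ (2 * ((T.card : ℝ) * M)) / |d| := by
        rw [le_div_iff₀ hdpos]
        exact habs
      linarith [hK, this]
    have : (T.card : ℝ) * c₀ = 1 := by
      rw [hd] at hd0
      linarith [hd0]
    rw [← hc₀']
    exact this
  constructor
  · intro ω hω
    rw [hrangeT, Set.ncard_coe_finset]
    exact main ω ((hmemT ω).mp hω)
  · intro ω hω ω' hω'
    have h1 := main ω ((hmemT ω).mp hω)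
    have h2 := main ω' ((hmemT ω').mp hω')
    have hTne : (0:ℝ) < (T.card : ℝ) := by
      have : T.Nonempty := ⟨ω, (hmemT ω).mp hω⟩
      exact_mod_cast Finset.card_pos.mpr this
    have := h1.trans h2.symm
    exact mul_left_cancel₀ (ne_of_gt hTne) this
end

section
/- (Neumann's lemma.) Let (Ω,M) be a finite transformation monoid whose group of units acts transitively on Ω: for all α, β ∈ Ω there exists an invertible element g of M (i.e., g ∈ M having an inverse in M) with αg = β. Then for every m in the minimal ideal I(M), the partition ker m is uniform: for all ω, ω' ∈ Ωm, the fibers satisfy |{α : αm = ω}| = |{α : αm = ω'}|; equivalently |Ωm| · |{α : αm = ω}| = |Ω| for every ω ∈ Ωm. -/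
/-!
Let `m` lie in the minimal ideal and let `R` be its image. For a unit `g`, the map `m ∘ g ∘ m`
generates an ideal containing `m`, so its image is no smaller than `R`; hence `m ∘ g` permutes
`R`, i.e. every fiber `F` of `m` meets `g '' R` in exactly one point. On the other hand, the
units act transitively, so averaged over all units `g` the size of `F ∩ g '' R` is
`|R| * |F| / |Ω|`. Therefore `|R| * |F| = |Ω|`.
-/

open Finset MulAction Set

section DoubleCounting

variable (G : Type*) {α : Type*} [Group G] [Fintype G] [MulAction G α] [IsPretransitive G α]
  [Fintype α] [DecidableEq α]

theorem card_mul_card_filter_smul_eq (a b : α) :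
    Fintype.card α * #{g : G | g • a = b} = Fintype.card G := by
  have hconst : ∀ b', #{g : G | g • a = b'} = #{g : G | g • a = b} := by
    intro b'
    obtain ⟨h, rfl⟩ := exists_smul_eq G b' b
    exact card_nbij' (h * ·) (h⁻¹ * ·) (fun g hg => by simp_all [mul_smul])
      (fun g hg => by simp_all [mul_smul]) (fun g _ => inv_mul_cancel_left h g)
      (fun g _ => mul_inv_cancel_left h g)
  calc Fintype.card α * #{g : G | g • a = b} = ∑ b' : α, #{g : G | g • a = b'} := by
        simp [hconst]
    _ = Fintype.card G := (card_eq_sum_card_fiberwise (by simp)).symm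

theorem card_mul_card_filter_smul_mem (a : α) (B : Finset α) :
    Fintype.card α * #{g : G | g • a ∈ B} = Fintype.card G * #B := by
  rw [card_eq_sum_card_fiberwise (f := (· • a)) (t := B) (fun g hg => by simpa using hg), mul_sum]
  calc ∑ b ∈ B, Fintype.card α * #{g ∈ {g : G | g • a ∈ B} | g • a = b}
      = ∑ b ∈ B, Fintype.card G := sum_congr rfl fun b hb => by
        rw [← card_mul_card_filter_smul_eq G a b, filter_filter]
        congr 2
        exact filter_congr fun g _ => ⟨And.right, fun h => ⟨h ▸ hb, h⟩⟩
    _ = Fintype.card G * #B := by rw [sum_const, smul_eq_mul, mul_comm]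

theorem card_mul_sum_card_filter_smul_mem (A B : Finset α) :
    Fintype.card α * ∑ g : G, #{x ∈ A | g • x ∈ B} = Fintype.card G * #A * #B := by
  have hswap : ∑ g : G, #{x ∈ A | g • x ∈ B} = ∑ x ∈ A, #{g : G | g • x ∈ B} := by
    simp only [card_filter]
    exact sum_comm
  rw [hswap, mul_sum, sum_congr rfl fun x _ => card_mul_card_filter_smul_mem G x B, sum_const,
    smul_eq_mul]
  ring

end DoubleCounting

theorem ncard_range_le_of_eq_comp {α β γ δ : Type*} [Finite γ] {m : α → δ} {u : α → β}
    {n : β → γ} {v : γ → δ} (h : m = v ∘ n ∘ u) : (range m).ncard ≤ (range n).ncard := by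
  subst h
  calc (range (v ∘ n ∘ u)).ncard ≤ (v '' range n).ncard :=
        ncard_le_ncard (by rw [range_comp]; exact image_mono (range_comp_subset_range u n))
    _ ≤ (range n).ncard := ncard_image_le

theorem bijOn_range_of_ncard_range_le {α : Type*} [Finite α] {m f : α → α}
    (h : (range m).ncard ≤ (range (m ∘ f ∘ m)).ncard) : BijOn (m ∘ f) (range m) (range m) := by
  have hmaps : MapsTo (m ∘ f) (range m) (range m) := fun _ _ => mem_range_self _
  rw [← Function.comp_assoc, range_comp] at h
  have himage : (m ∘ f) '' range m = range m := eq_of_subset_of_ncard_le hmaps.image_subset h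
  exact ⟨hmaps, injOn_of_ncard_image_eq (by rw [himage]), himage.symm.subset⟩

theorem card_filter_eq_one_of_bijOn {α β : Type*} [DecidableEq β] {f : α → β} {s : Finset α}
    {t : Set β} (h : BijOn f s t) {b : β} (hb : b ∈ t) : #{x ∈ s | f x = b} = 1 := by
  obtain ⟨a, ha, rfl⟩ := h.surjOn hb
  rw [card_eq_one]
  refine ⟨a, ext fun x => ?_⟩
  simp only [mem_filter, Finset.mem_singleton]
  exact ⟨fun hx => h.injOn hx.1 ha hx.2, by rintro rfl; exact ⟨ha, rfl⟩⟩

/-- Neumann's lemma. Let `(Ω, M)` be a finite transformation monoid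
whose group of units acts transitively on `Ω`.  Then for every `m` in the minimal
ideal `I(M)`, the partition `ker m` is uniform: all fibers of `m` over its image have
the same cardinality; equivalently `|Ωm| ⋅ |{α : αm = ω}| = |Ω|` for every
`ω ∈ Ωm`. -/
theorem neumann_lemma {Ω : Type*} [Fintype Ω]
    (S : Set (Ω → Ω)) (hid : id ∈ S) (hcomp : ∀ m ∈ S, ∀ n ∈ S, n ∘ m ∈ S)
    (htrans : ∀ α β : Ω, ∃ g ∈ S,
      (∃ h ∈ S, g ∘ h = id ∧ h ∘ g = id) ∧ g α = β) :
    ∀ m ∈ S, (∀ n ∈ S, ∃ u ∈ S, ∃ v ∈ S, m = v ∘ n ∘ u) →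
      (∀ ω ∈ Set.range m, ∀ ω' ∈ Set.range m,
        {α : Ω | m α = ω}.ncard = {α : Ω | m α = ω'}.ncard) ∧
      (∀ ω ∈ Set.range m,
        (Set.range m).ncard * {α : Ω | m α = ω}.ncard = Fintype.card Ω) := by
  classical
  intro m hm hmin
  let M : Submonoid (Function.End Ω) :=
    { carrier := S, one_mem' := hid, mul_mem' := fun ha hb => hcomp _ hb _ ha }
  have : IsPretransitive Mˣ Ω := ⟨fun α β => by
    obtain ⟨g, hg, ⟨h, hh, hgh, hhg⟩, rfl⟩ := htrans α β
    exact ⟨⟨⟨g, hg⟩, ⟨h, hh⟩, Subtype.ext hgh, Subtype.ext hhg⟩, rfl⟩⟩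
  have : Finite (Function.End Ω) := inferInstanceAs (Finite (Ω → Ω))
  let := Fintype.ofFinite Mˣ
  have hbij (g : Mˣ) : BijOn (m ∘ ((g : M) : Function.End Ω)) (range m) (range m) := by
    obtain ⟨u, -, v, -, h⟩ := hmin _ (hcomp _ (hcomp _ hm _ (g : M).2) _ hm)
    exact bijOn_range_of_ncard_range_le (ncard_range_le_of_eq_comp h)
  have hfiber : ∀ ω ∈ range m, (range m).ncard * {α | m α = ω}.ncard = Fintype.card Ω := by
    intro ω hω
    have hcount :=
      card_mul_sum_card_filter_smul_mem Mˣ (range m).toFinset {α | m α = ω}.toFinset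
    have hone (g : Mˣ) : #{x ∈ (range m).toFinset | g • x ∈ {α | m α = ω}.toFinset} = 1 := by
      simp only [mem_toFinset]
      exact card_filter_eq_one_of_bijOn (by rw [coe_toFinset]; exact hbij g) hω
    simp only [hone, sum_const, card_univ, smul_eq_mul, mul_one] at hcount
    rw [ncard_eq_toFinset_card', ncard_eq_toFinset_card']
    exact Nat.eq_of_mul_eq_mul_left Fintype.card_pos (by rw [← mul_assoc, ← hcount, mul_comm])
  refine ⟨fun ω hω ω' hω' => ?_, hfiber⟩
  have hpos : 0 < (range m).ncard := (ncard_pos (toFinite _)).2 ⟨ω, hω⟩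
  exact Nat.eq_of_mul_eq_mul_left hpos ((hfiber ω hω).trans (hfiber ω' hω').symm)
end

section
/- Let (Ω,M) be a finite transformation monoid containing an Eulerian subset A ⊆ M, i.e., the submonoid generated by A is transitive on Ω and for every ω ∈ Ω one has |A| = Σ_{a∈A} |{α : αa = ω}|. Then for every m in the minimal ideal I(M), the partition ker m is uniform: all fibers {α : αm = ω} with ω ∈ Ωm have the same cardinality. In particular, if |Ω| is a prime number, then either every element of M is a bijection of Ω (M is a group) or M contains a constant map. -/
/-!
Let `X` be the transition operator of the random walk on `Ω` that applies a uniformly chosen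
`a ∈ A`. The Euler condition says that the uniform distribution is stationary for this walk, and
by transitivity and the maximum principle the only `X`-fixed functions are the constants. Hence
the Poisson equation `|Ω| v - ∑ v = z - X z` is solvable, and if the sums `∑_{t ∈ T} (Xᵏ v) t`
take a constant value `s`, telescoping against the bounded sequence `∑_{t ∈ T} (Xᵏ z) t` gives
`s |Ω| = |T| ∑ v`.

For `m` in the minimal ideal and `g` in the monoid, `m ∘ g` permutes `range m`, so every
translate `g (range m)` meets each fibre of `m` exactly once. With `T = range m` and `v` the
indicator of a fibre this gives `s = 1`, so every fibre has `|Ω| / |range m|` points. When `|Ω|`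
is prime, `|range m|` is `1` (a constant map) or `|Ω|` (then `m`, and with it every element of
the monoid, is a bijection).
-/

open Finset

theorem eq_zero_of_forall_abs_natCast_mul_le {ε B : ℝ} (h : ∀ k : ℕ, |k * ε| ≤ B) :
    ε = 0 := by
  by_contra hε
  obtain ⟨k, hk⟩ := exists_nat_gt (B / |ε|)
  rw [div_lt_iff₀ (abs_pos.2 hε)] at hk
  have := h k
  rw [abs_mul, Nat.abs_cast] at this
  linarith

namespace TransformationMonoid

variable {Ω : Type*} (A : Finset (Function.End Ω))

noncomputable def averagingOp : Module.End ℝ (Ω → ℝ) where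
  toFun v α := (#A : ℝ)⁻¹ * ∑ a ∈ A, v (a • α)
  map_add' v w := by ext; simp [sum_add_distrib, mul_add]
  map_smul' c v := by ext; simp [mul_sum, mul_left_comm]

theorem averagingOp_apply (v : Ω → ℝ) (α : Ω) :
    averagingOp A v α = (#A : ℝ)⁻¹ * ∑ a ∈ A, v (a • α) := rfl

theorem averagingOp_const (hA : A.Nonempty) (c : ℝ) :
    averagingOp A (fun _ => c) = fun _ => c := by
  ext α
  rw [averagingOp_apply, sum_const, nsmul_eq_mul,
    inv_mul_cancel_left₀ (by exact_mod_cast hA.card_ne_zero)]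

theorem averagingOp_pow_const (hA : A.Nonempty) (c : ℝ) (k : ℕ) :
    (averagingOp A ^ k) (fun _ => c) = fun _ => c := by
  induction k with
  | zero => rfl
  | succ k ih => rw [pow_succ, Module.End.mul_apply, averagingOp_const A hA, ih]

theorem norm_averagingOp_le [Fintype Ω] (v : Ω → ℝ) : ‖averagingOp A v‖ ≤ ‖v‖ := by
  refine (pi_norm_le_iff_of_nonneg (norm_nonneg v)).2 fun α => ?_
  rw [averagingOp_apply, norm_mul, norm_inv, Real.norm_natCast]
  calc (#A : ℝ)⁻¹ * ‖∑ a ∈ A, v (a • α)‖ ≤ (#A : ℝ)⁻¹ * (#A * ‖v‖) := by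
        gcongr
        simpa using norm_sum_le_of_le A fun a _ => norm_le_pi_norm v (a • α)
    _ ≤ ‖v‖ := by
        rcases A.eq_empty_or_nonempty with rfl | hA
        · simp
        · rw [inv_mul_cancel_left₀ (by exact_mod_cast hA.card_ne_zero)]

theorem norm_averagingOp_pow_le [Fintype Ω] (k : ℕ) (v : Ω → ℝ) :
    ‖(averagingOp A ^ k) v‖ ≤ ‖v‖ := by
  induction k with
  | zero => rfl
  | succ k ih =>
    rw [pow_succ', Module.End.mul_apply]
    exact (norm_averagingOp_le A _).trans ih

theorem sum_averagingOp [Fintype Ω] [DecidableEq Ω] (hA : A.Nonempty)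
    (hEuler : ∀ ω, #A = ∑ a ∈ A, #{α : Ω | a • α = ω}) (v : Ω → ℝ) :
    ∑ α, averagingOp A v α = ∑ α, v α := by
  have hfiber (a : Function.End Ω) :
      ∑ α, v (a • α) = ∑ ω, (#{α : Ω | a • α = ω} : ℝ) * v ω := by
    rw [← sum_fiberwise univ (a • ·)]
    refine sum_congr rfl fun ω _ => ?_
    rw [sum_congr rfl fun α hα => congrArg v (mem_filter.1 hα).2, sum_const, nsmul_eq_mul]
  simp_rw [averagingOp_apply, ← mul_sum]
  rw [sum_comm, sum_congr rfl fun a _ => hfiber a, sum_comm]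
  simp_rw [← sum_mul, ← Nat.cast_sum, ← hEuler, ← mul_sum]
  rw [inv_mul_cancel_left₀ (by exact_mod_cast hA.card_ne_zero)]

variable {A}

theorem sum_averagingOp_pow_eq (hA : A.Nonempty) (T : Finset Ω) {v : Ω → ℝ} {s : ℝ}
    (hv : ∀ g ∈ Submonoid.closure (A : Set (Function.End Ω)), ∑ t ∈ T, v (g • t) = s)
    (k : ℕ) : ∑ t ∈ T, (averagingOp A ^ k) v t = s := by
  induction k generalizing v with
  | zero => simpa using hv 1 (Submonoid.one_mem _)
  | succ k ih =>
    have hX : averagingOp A v = (#A : ℝ)⁻¹ • ∑ a ∈ A, fun α => v (a • α) := by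
      ext; simp [averagingOp_apply]
    have hterm (a : Function.End Ω) (ha : a ∈ A) :
        ∑ t ∈ T, (averagingOp A ^ k) (fun α => v (a • α)) t = s :=
      ih fun g hg => by
        simpa [mul_smul] using hv (a * g) (mul_mem (Submonoid.subset_closure ha) hg)
    rw [pow_succ, Module.End.mul_apply, hX, map_smul, map_sum]
    simp only [Pi.smul_apply, Finset.sum_apply, smul_eq_mul, ← mul_sum]
    rw [sum_comm, sum_congr rfl hterm, sum_const, nsmul_eq_mul,
      inv_mul_cancel_left₀ (by exact_mod_cast hA.card_ne_zero)]

theorem eq_of_averagingOp_eq [Finite Ω]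
    (htrans : ∀ α β : Ω, ∃ g ∈ Submonoid.closure (A : Set (Function.End Ω)), g • α = β)
    {v : Ω → ℝ} (hv : averagingOp A v = v) (α β : Ω) : v α = v β := by
  have : Nonempty Ω := ⟨α⟩
  obtain ⟨α₀, hmax⟩ := Finite.exists_max v
  have hstep (a : Function.End Ω) (ha : a ∈ A) (γ : Ω) (hγ : v γ = v α₀) :
      v (a • γ) = v α₀ := by
    have hsum : ∑ b ∈ A, v (b • γ) = ∑ _b ∈ A, v α₀ := by
      rw [sum_const, nsmul_eq_mul, ← hγ, ← congrFun hv γ, averagingOp_apply,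
        mul_inv_cancel_left₀ (by exact_mod_cast card_ne_zero_of_mem ha)]
    exact (sum_eq_sum_iff_of_le fun b _ => hmax _).1 hsum a ha
  have hclosure (g : Function.End Ω) (hg : g ∈ Submonoid.closure (A : Set (Function.End Ω)))
      (γ : Ω) (hγ : v γ = v α₀) : v (g • γ) = v α₀ := by
    induction hg using Submonoid.closure_induction generalizing γ with
    | mem a ha => exact hstep a ha γ hγ
    | one => rwa [one_smul]
    | mul g h _ _ ihg ihh => rw [mul_smul]; exact ihg _ (ihh γ hγ)
  obtain ⟨g, hg, rfl⟩ := htrans α₀ α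
  obtain ⟨h, hh, rfl⟩ := htrans α₀ β
  rw [hclosure g hg α₀ rfl, hclosure h hh α₀ rfl]

theorem nonempty_of_forall_exists_mem_closure [Nontrivial Ω]
    (htrans : ∀ α β : Ω, ∃ g ∈ Submonoid.closure (A : Set (Function.End Ω)), g • α = β) :
    A.Nonempty := by
  rw [nonempty_iff_ne_empty]
  rintro rfl
  obtain ⟨α, β, hαβ⟩ := exists_pair_ne Ω
  obtain ⟨g, hg, rfl⟩ := htrans α β
  rw [coe_empty, Submonoid.closure_empty, Submonoid.mem_bot] at hg
  exact hαβ (by rw [hg, one_smul])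

structure IsEulerian [Fintype Ω] [DecidableEq Ω] (A : Finset (Function.End Ω)) : Prop where
  transitive : ∀ α β : Ω, ∃ g ∈ Submonoid.closure (A : Set (Function.End Ω)), g • α = β
  card_eq_sum_card_fiber : ∀ ω, #A = ∑ a ∈ A, #{α : Ω | a • α = ω}

theorem exists_eq_sub_averagingOp [Fintype Ω] [DecidableEq Ω] (hE : IsEulerian A)
    (hA : A.Nonempty) {d : Ω → ℝ} (hd : ∑ α, d α = 0) :
    ∃ z, d = z - averagingOp A z := by
  rcases isEmpty_or_nonempty Ω with hΩ | hΩ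
  · exact ⟨0, Subsingleton.elim _ _⟩
  -- `ker f` is the line of constants, so `range f` has codimension one and fills `ker l`.
  let f : Module.End ℝ (Ω → ℝ) := 1 - averagingOp A
  let l : (Ω → ℝ) →ₗ[ℝ] ℝ := ∑ α, LinearMap.proj α
  have hl (v : Ω → ℝ) : l v = ∑ α, v α := by simp [l]
  have hrange_le : LinearMap.range f ≤ LinearMap.ker l := by
    rintro _ ⟨v, rfl⟩
    simp [f, hl, sum_sub_distrib, sum_averagingOp A hA hE.card_eq_sum_card_fiber]
  have hker_le : LinearMap.ker f ≤ ℝ ∙ (1 : Ω → ℝ) := fun v hv => by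
    have hfix : averagingOp A v = v := (sub_eq_zero.1 (by simpa [f] using hv)).symm
    refine Submodule.mem_span_singleton.2 ⟨v hΩ.some, funext fun α => ?_⟩
    simpa using eq_of_averagingOp_eq hE.transitive hfix hΩ.some α
  have hker_l : LinearMap.ker l ≠ ⊤ := fun h => by
    have : l 1 = 0 := LinearMap.mem_ker.1 (h ▸ Submodule.mem_top)
    simp [hl] at this
  have hrank := LinearMap.finrank_range_add_finrank_ker f
  have hker_f := (Submodule.finrank_mono hker_le).trans_eq
    (finrank_span_singleton (one_ne_zero (α := Ω → ℝ)))
  have hlt := Submodule.finrank_lt hker_l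
  have hrange : LinearMap.range f = LinearMap.ker l :=
    Submodule.eq_of_le_of_finrank_le hrange_le (by omega)
  obtain ⟨z, hz⟩ : d ∈ LinearMap.range f := hrange ▸ LinearMap.mem_ker.2 ((hl d).trans hd)
  exact ⟨z, hz.symm⟩

theorem mul_card_eq_of_sum_averagingOp_pow_eq [Fintype Ω] [DecidableEq Ω] (hE : IsEulerian A)
    (hA : A.Nonempty) (T : Finset Ω) {v : Ω → ℝ} {s : ℝ}
    (hs : ∀ k, ∑ t ∈ T, (averagingOp A ^ k) v t = s) :
    s * Fintype.card Ω = #T * ∑ α, v α := by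
  set X := averagingOp A
  set n : ℝ := (Fintype.card Ω : ℝ)
  set σ := ∑ α, v α
  obtain ⟨z, hz⟩ := exists_eq_sub_averagingOp hE hA (d := n • v - fun _ => σ)
    (by simp [n, σ, sum_sub_distrib, mul_sum])
  have hpow (k : ℕ) (t : Ω) : n * (X ^ k) v t = σ + ((X ^ k) z t - (X ^ (k + 1)) z t) := by
    have := congrFun (congrArg (X ^ k) hz) t
    rw [map_sub, map_smul, averagingOp_pow_const A hA, map_sub, ← Module.End.mul_apply,
      ← pow_succ] at this
    simp only [Pi.sub_apply, Pi.smul_apply, smul_eq_mul] at this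
    linarith
  set a : ℕ → ℝ := fun k => ∑ t ∈ T, (X ^ k) z t
  have ha (k : ℕ) : |a k| ≤ #T * ‖z‖ := by
    simpa using norm_sum_le_of_le T fun t _ =>
      (norm_le_pi_norm ((X ^ k) z) t).trans (norm_averagingOp_pow_le A k z)
  have hstep (k : ℕ) : a k - a (k + 1) = n * s - #T * σ := by
    simp only [a, ← sum_sub_distrib, ← hs k, mul_sum, hpow, sum_add_distrib, sum_const,
      nsmul_eq_mul]
    ring
  have htelescope (k : ℕ) : k * (n * s - #T * σ) = a 0 - a k := by
    rw [← sum_range_sub', sum_congr rfl fun i _ => hstep i, sum_const, card_range, nsmul_eq_mul]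
  have := eq_zero_of_forall_abs_natCast_mul_le (ε := n * s - #T * σ) (B := 2 * (#T * ‖z‖))
    fun k => by
      rw [htelescope]
      linarith [abs_sub (a 0) (a k), ha 0, ha k]
  linarith

def MemMinimalIdeal {N : Type*} [Monoid N] (M : Submonoid N) (m : N) : Prop :=
  m ∈ M ∧ ∀ n ∈ M, ∃ u ∈ M, ∃ v ∈ M, m = v * n * u

theorem exists_memMinimalIdeal {N : Type*} [Monoid N] (M : Submonoid N)
    (hM : (M : Set N).Finite) : ∃ m, MemMinimalIdeal M m := by
  set L := hM.toFinset.toList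
  have hL (x : N) : x ∈ L ↔ x ∈ M := by simp [L]
  refine ⟨L.prod, M.list_prod_mem fun x hx => (hL x).1 hx, fun n hn => ?_⟩
  obtain ⟨s, t, hst⟩ := List.append_of_mem ((hL n).2 hn)
  refine ⟨t.prod, M.list_prod_mem fun x hx => (hL x).1 (by simp [hst, hx]),
    s.prod, M.list_prod_mem fun x hx => (hL x).1 (by simp [hst, hx]), ?_⟩
  rw [hst, List.prod_append, List.prod_cons, mul_assoc]

theorem bijOn_range_of_memMinimalIdeal [Finite Ω] {M : Submonoid (Function.End Ω)}
    {m g : Function.End Ω} (hm : MemMinimalIdeal M m) (hg : g ∈ M) :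
    Set.BijOn (m * g) (Set.range m) (Set.range m) := by
  obtain ⟨u, -, v, -, huv⟩ := hm.2 (m * g * m) (mul_mem (mul_mem hm.1 hg) hm.1)
  have hmaps : Set.MapsTo (m * g) (Set.range m) (Set.range m) := by
    rintro _ ⟨t, rfl⟩
    exact ⟨g (m t), rfl⟩
  have hle : (Set.range m).ncard ≤ ((m * g) '' Set.range m).ncard := by
    calc (Set.range m).ncard ≤ (v '' ((m * g) '' Set.range m)).ncard := by
          refine Set.ncard_le_ncard ?_ (Set.toFinite _)
          rintro _ ⟨t, rfl⟩
          exact ⟨m (g (m (u t))), ⟨m (u t), ⟨u t, rfl⟩, rfl⟩, (congrFun huv t).symm⟩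
      _ ≤ ((m * g) '' Set.range m).ncard := Set.ncard_image_le (Set.toFinite _)
  have himage : (m * g) '' Set.range m = Set.range m :=
    Set.eq_of_subset_of_ncard_le hmaps.image_subset hle
  exact ⟨hmaps, Set.injOn_of_ncard_image_eq (le_antisymm Set.ncard_image_le hle),
    himage.symm.subset⟩

theorem bijective_of_memMinimalIdeal_of_surjective [Finite Ω]
    {M : Submonoid (Function.End Ω)} {m n : Function.End Ω} (hm : MemMinimalIdeal M m)
    (hsurj : Function.Surjective m) (hn : n ∈ M) : Function.Bijective n := by
  obtain ⟨u, -, v, -, rfl⟩ := hm.2 n hn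
  have hvn : Function.Surjective (v * n) := hsurj.of_comp
  have hv : Function.Injective v := Finite.injective_iff_surjective.2 hvn.of_comp
  exact Finite.surjective_iff_bijective.1 (hvn.of_comp_left hv)

theorem ncard_range_mul_ncard_fiber [Fintype Ω] [DecidableEq Ω]
    {M : Submonoid (Function.End Ω)} (hE : IsEulerian A) (hA : A.Nonempty)
    (hAM : (A : Set (Function.End Ω)) ⊆ M) {m : Function.End Ω}
    (hm : MemMinimalIdeal M m) {ω : Ω} (hω : ω ∈ Set.range m) :
    (Set.range m).ncard * {α | m α = ω}.ncard = Fintype.card Ω := by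
  set T := (Set.toFinite (Set.range m)).toFinset
  have hT : (T : Set Ω) = Set.range m := Set.Finite.coe_toFinset _
  let v : Ω → ℝ := fun α => if m α = ω then 1 else 0
  have hv (g) (hg : g ∈ Submonoid.closure (A : Set (Function.End Ω))) :
      ∑ t ∈ T, v (g • t) = 1 := by
    have hb := bijOn_range_of_memMinimalIdeal hm (Submonoid.closure_le.2 hAM hg)
    rw [← hT] at hb
    rw [sum_nbij (m * g) (fun _ ht => hb.mapsTo ht) hb.injOn hb.surjOn
      (f := fun t => v (g • t)) (g := fun τ => if τ = ω then (1 : ℝ) else 0) fun _ _ => rfl,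
      sum_ite_eq', if_pos (by rwa [← mem_coe, hT])]
  have hsum : ∑ α, v α = ({α | m α = ω}.ncard : ℝ) := by
    simp only [v]
    rw [sum_boole, ← Set.ncard_coe_finset]
    congr
    ext
    simp
  have := mul_card_eq_of_sum_averagingOp_pow_eq hE hA T (sum_averagingOp_pow_eq hA T hv)
  rw [one_mul, hsum, ← Set.ncard_coe_finset, hT] at this
  exact_mod_cast this.symm

theorem ncard_fiber_eq_of_memMinimalIdeal [Fintype Ω] [DecidableEq Ω]
    {M : Submonoid (Function.End Ω)} (hE : IsEulerian A) (hAM : (A : Set (Function.End Ω)) ⊆ M)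
    {m : Function.End Ω} (hm : MemMinimalIdeal M m) (ω : Ω) (hω : ω ∈ Set.range m) (ω' : Ω)
    (hω' : ω' ∈ Set.range m) : {α | m α = ω}.ncard = {α | m α = ω'}.ncard := by
  rcases subsingleton_or_nontrivial Ω with hΩ | hΩ
  · rw [Subsingleton.elim ω ω']
  have hA := nonempty_of_forall_exists_mem_closure hE.transitive
  exact Nat.eq_of_mul_eq_mul_left ((Set.ncard_pos (Set.toFinite _)).2 ⟨ω, hω⟩)
    ((ncard_range_mul_ncard_fiber hE hA hAM hm hω).trans
      (ncard_range_mul_ncard_fiber hE hA hAM hm hω').symm)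

theorem forall_bijective_or_exists_const [Fintype Ω] [DecidableEq Ω]
    {M : Submonoid (Function.End Ω)} (hE : IsEulerian A) (hAM : (A : Set (Function.End Ω)) ⊆ M)
    (hM : (M : Set (Function.End Ω)).Finite) (hp : (Fintype.card Ω).Prime) :
    (∀ n ∈ M, Function.Bijective n) ∨ ∃ c : Ω, Function.const Ω c ∈ M := by
  have : Nontrivial Ω := Fintype.one_lt_card_iff_nontrivial.1 hp.one_lt
  obtain ⟨m, hm⟩ := exists_memMinimalIdeal M hM
  have hkey := ncard_range_mul_ncard_fiber hE
    (nonempty_of_forall_exists_mem_closure hE.transitive) hAM hm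
    (Set.mem_range_self (Classical.arbitrary Ω))
  rcases hp.eq_one_or_self_of_dvd _ ⟨_, hkey.symm⟩ with hrange | hrange
  · obtain ⟨c, hc⟩ := Set.ncard_eq_one.1 hrange
    have hconst : (Function.const Ω c : Function.End Ω) = m :=
      funext fun x => (hc ▸ Set.mem_range_self x : m x ∈ ({c} : Set Ω)).symm
    exact Or.inr ⟨c, hconst ▸ hm.1⟩
  · refine Or.inl fun n hn => bijective_of_memMinimalIdeal_of_surjective hm ?_ hn
    refine Set.range_eq_univ.1 (Set.eq_of_subset_of_ncard_le (Set.subset_univ _) ?_)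
    rw [Set.ncard_univ, hrange, Nat.card_eq_fintype_card]

end TransformationMonoid

open TransformationMonoid in
/-- Let `(Ω, M)` be a finite transformation monoid containing an
Eulerian subset `A ⊆ M`: the submonoid generated by `A` is transitive on `Ω` and for
every `ω ∈ Ω` one has `|A| = ∑_{a ∈ A} |ωa⁻¹|`.  Then for every `m` in the minimal
ideal `I(M)` the partition `ker m` is uniform; in particular, if `|Ω|` is prime, then
either every element of `M` is a bijection of `Ω` or `M` contains a constant map. -/
theorem eulerian_neumann {Ω : Type*} [Fintype Ω] [DecidableEq Ω]
    (S : Set (Ω → Ω)) (hid : id ∈ S) (hcomp : ∀ m ∈ S, ∀ n ∈ S, n ∘ m ∈ S)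
    (A : Finset (Function.End Ω)) (hAS : ∀ a ∈ A, (a : Ω → Ω) ∈ S)
    (htrans : ∀ α β : Ω,
      ∃ m ∈ Submonoid.closure (↑A : Set (Function.End Ω)), m α = β)
    (hEuler : ∀ ω : Ω,
      A.card = ∑ a ∈ A, (@Finset.filter Ω (fun α : Ω => a α = ω) (fun α => ‹DecidableEq Ω› (a α) ω) Finset.univ).card) :
    (∀ m ∈ S, (∀ n ∈ S, ∃ u ∈ S, ∃ v ∈ S, m = v ∘ n ∘ u) →
      ∀ ω ∈ Set.range m, ∀ ω' ∈ Set.range m,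
        {α : Ω | m α = ω}.ncard = {α : Ω | m α = ω'}.ncard) ∧
    ((Fintype.card Ω).Prime →
      (∀ m ∈ S, Function.Bijective m) ∨ ∃ c : Ω, Function.const Ω c ∈ S) := by
  let M : Submonoid (Function.End Ω) :=
    { carrier := S, mul_mem' := fun ha hb => hcomp _ hb _ ha, one_mem' := hid }
  have hAM : (A : Set (Function.End Ω)) ⊆ M := hAS
  have hE : IsEulerian A := ⟨htrans, hEuler⟩
  exact ⟨fun m hm hmin => ncard_fiber_eq_of_memMinimalIdeal hE hAM ⟨hm, hmin⟩,
    forall_bijective_or_exists_const hE hAM (Set.toFinite S)⟩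
end
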